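/- arXiv:1307.1521 — 5 statements merged into one kernel-verified Lean document; each statement's English description precedes it below -/
import Mathlib

section
/- Let {a(n)} denote Stern's diatomic sequence and let φ = (1+√5)/2 be the golden ratio. Then limsup_{n→∞} a(n)/n^{log₂ φ} = φ^{log₂ 3}/√5, where log₂ denotes the base-2 logarithm. -/
/-!
Write θ = log₂ φ, so that 2^θ = φ and 4^θ = φ². By strong induction on n, splitting n by its
residue mod 4, one proves simultaneously
  φ a(n) + a(n+1) ≤ (3n+1)^θ,   a(n) + φ a(n+1) ≤ (3n+2)^θ,   √5 a(n) ≤ Y - Y⁻¹ with Y = (3n+1)^θ;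
the first two only serve to carry the induction, and the delicate case n = 4k+3 rests on the
concavity of x ↦ x^θ. The third bound gives limsup ≤ 3^θ/√5, and it is an equality at
n = (4^(j+1) - 1)/3, where a(n) = F(2j+2) and Y = φ^(2j+2) (Binet's formula). Finally
φ^(log₂ 3) = 3^(log₂ φ).
-/

open Real Filter Topology
open scoped goldenRatio

local notation "θ" => Real.logb 2 φ

lemma rpow_logb_comm {b x y : ℝ} (hb : 0 < b) (hb1 : b ≠ 1) (hx : 0 < x) (hy : 0 < y) :
    x ^ logb b y = y ^ logb b x := by
  conv_lhs => rw [← rpow_logb hb hb1 hx]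
  conv_rhs => rw [← rpow_logb hb hb1 hy]
  rw [← rpow_mul hb.le, ← rpow_mul hb.le, mul_comm]

lemma rpow_add_le_rpow_add_mul_div {p x δ : ℝ} (hp0 : 0 ≤ p) (hp1 : p ≤ 1) (hx : 0 < x)
    (hδ : -x ≤ δ) : (x + δ) ^ p ≤ x ^ p + p * δ * x ^ p / x := by
  have hs : -1 ≤ δ / x := by rwa [le_div_iff₀ hx, neg_one_mul]
  calc (x + δ) ^ p = x ^ p * (1 + δ / x) ^ p := by
        rw [← mul_rpow hx.le (by linarith), mul_one_add, mul_div_cancel₀ _ hx.ne']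
    _ ≤ x ^ p * (1 + p * (δ / x)) :=
        mul_le_mul_of_nonneg_left (rpow_one_add_le_one_add_mul_self hs hp0 hp1) (by positivity)
    _ = x ^ p + p * δ * x ^ p / x := by field_simp

lemma limsup_eq_of_tendsto_of_eventuallyLE_of_frequently_ge {ι : Type*} {l : Filter ι}
    {f g : ι → ℝ} {L : ℝ} (hg : Tendsto g l (𝓝 L)) (hle : f ≤ᶠ[l] g)
    (hge : ∃ᶠ i in l, g i ≤ f i) : limsup f l = L := by
  have : l.NeBot := ⟨by rintro rfl; simp at hge⟩
  have hbdd : IsBoundedUnder (· ≤ ·) l f := hg.isBoundedUnder_le.mono_le hle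
  have hfreq : ∀ c < L, ∃ᶠ i in l, c ≤ f i := fun c hc =>
    (hge.and_eventually (hg.eventually (eventually_ge_nhds hc))).mono
      fun i ⟨hgf, hcg⟩ => hcg.trans hgf
  apply le_antisymm
  · calc limsup f l ≤ limsup g l := limsup_le_limsup hle
          (IsCoboundedUnder.of_frequently_ge (hfreq (L - 1) (by linarith))) hg.isBoundedUnder_le
      _ = L := hg.limsup_eq
  · exact le_of_forall_lt_imp_le_of_dense fun c hc => le_limsup_of_frequently_le (hfreq c hc) hbdd

lemma sqrt_five_eq : √5 = 2 * φ - 1 := by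
  rw [← goldenRatio_sub_goldenConj, ← one_sub_goldenConj]; ring

lemma two_sub_goldenRatio_mul_sq : (2 - φ) * φ ^ 2 = 1 := by
  linear_combination (1 - φ) * goldenRatio_sq

lemma eleven_div_seven_lt_goldenRatio : 11 / 7 < φ := by
  nlinarith [goldenRatio_sq, one_lt_goldenRatio]

lemma inv_sub_inv_le_of_goldenRatio_le {X Y : ℝ} (hX : φ ≤ X) (hXY : X ≤ Y) :
    X⁻¹ - Y⁻¹ ≤ (2 - φ) * (Y - X) := by
  have hX0 : 0 < X := goldenRatio_pos.trans_le hX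
  have hY0 : 0 < Y := hX0.trans_le hXY
  rw [inv_sub_inv hX0.ne' hY0.ne', div_le_iff₀ (by positivity)]
  have h1 : 1 ≤ (2 - φ) * (X * Y) := by
    rw [← two_sub_goldenRatio_mul_sq]
    gcongr
    · linarith [goldenRatio_lt_two]
    · nlinarith [goldenRatio_pos]
  nlinarith

lemma two_rpow_logb_goldenRatio : (2 : ℝ) ^ θ = φ :=
  rpow_logb two_pos (by norm_num) goldenRatio_pos

lemma logb_goldenRatio_pos : 0 < θ := logb_pos one_lt_two one_lt_goldenRatio

lemma logb_goldenRatio_le : θ ≤ 3 / 4 := by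
  have h : logb 2 (φ ^ 4) ≤ logb 2 (2 ^ 3) :=
    logb_le_logb_of_le one_lt_two (by positivity)
      (by nlinarith [goldenRatio_sq, goldenRatio_lt_two])
  rw [logb_pow, logb_pow, logb_self_eq_one one_lt_two] at h
  push_cast at h
  linarith

namespace LogbGoldenRatio

lemma two_mul_rpow {x : ℝ} (hx : 0 ≤ x) : (2 * x) ^ θ = φ * x ^ θ := by
  rw [mul_rpow two_pos.le hx, two_rpow_logb_goldenRatio]

lemma four_mul_rpow {x : ℝ} (hx : 0 ≤ x) : (4 * x) ^ θ = φ ^ 2 * x ^ θ := by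
  rw [show (4 : ℝ) * x = 2 * (2 * x) by ring, two_mul_rpow (by positivity), two_mul_rpow hx]
  ring

lemma four_rpow : (4 : ℝ) ^ θ = φ ^ 2 := by
  simpa using four_mul_rpow zero_le_one

lemma goldenRatio_le_rpow {x : ℝ} (hx : 2 ≤ x) : φ ≤ x ^ θ := by
  calc φ = 2 ^ θ := two_rpow_logb_goldenRatio.symm
    _ ≤ x ^ θ := rpow_le_rpow two_pos.le hx logb_goldenRatio_pos.le

lemma add_one_rpow_le {x : ℝ} (hx : 4 ≤ x) : (x + 1) ^ θ ≤ x ^ θ + (φ - 1) := by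
  have hx0 : 0 < x := by linarith
  have hdecay : x ^ θ / x ≤ φ ^ 2 / 4 := by
    have h : (x / 4) ^ θ ≤ x / 4 :=
      rpow_le_self_of_one_le (by linarith) (by linarith [logb_goldenRatio_le])
    rw [div_rpow hx0.le (by norm_num), four_rpow,
      div_le_div_iff₀ (by positivity) (by norm_num)] at h
    rw [div_le_div_iff₀ hx0 (by norm_num)]
    linarith
  calc (x + 1) ^ θ ≤ x ^ θ + θ * 1 * x ^ θ / x :=
        rpow_add_le_rpow_add_mul_div logb_goldenRatio_pos.le (by linarith [logb_goldenRatio_le])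
          hx0 (by linarith)
    _ ≤ x ^ θ + 3 / 4 * (φ ^ 2 / 4) := by
        rw [mul_one, mul_div_assoc]
        gcongr
        · exact logb_goldenRatio_le
    _ ≤ x ^ θ + (φ - 1) := by nlinarith [goldenRatio_sq, eleven_div_seven_lt_goldenRatio]

end LogbGoldenRatio

open LogbGoldenRatio

noncomputable def sternMajorant (x : ℝ) : ℝ := x ^ θ - (x ^ θ)⁻¹

lemma sternMajorant_le_sternMajorant {x y : ℝ} (hx : 0 < x) (hxy : x ≤ y) :
    sternMajorant x ≤ sternMajorant y := by
  have h := rpow_le_rpow hx.le hxy logb_goldenRatio_pos.le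
  rw [sternMajorant, sternMajorant]
  linarith [inv_anti₀ (rpow_pos_of_pos hx θ) h]

lemma sternMajorant_four_mul {x : ℝ} (hx : 0 ≤ x) :
    sternMajorant (4 * x) = φ ^ 2 * x ^ θ - (2 - φ) * (x ^ θ)⁻¹ := by
  rw [sternMajorant, four_mul_rpow hx, mul_inv, ← one_div (φ ^ 2), ← two_sub_goldenRatio_mul_sq,
    mul_div_cancel_right₀ _ (by positivity)]

lemma le_sternMajorant_four_mul {x : ℝ} (hx : 2 ≤ x) :
    √5 * (x - 1 / 2) ^ θ + (2 - φ) * sternMajorant (x + 3 / 2) ≤ sternMajorant (4 * x) := by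
  have hx0 : 0 < x := by linarith
  have hθ0 := logb_goldenRatio_pos
  have hθ1 : θ ≤ 1 := by linarith [logb_goldenRatio_le]
  have hD : 0 ≤ θ * x ^ θ / x := by positivity
  have hP := rpow_add_le_rpow_add_mul_div hθ0.le hθ1 hx0 (δ := -(1 / 2)) (by linarith)
  have hY := rpow_add_le_rpow_add_mul_div hθ0.le hθ1 hx0 (δ := 3 / 2) (by linarith)
  have hXY : x ^ θ ≤ (x + 3 / 2) ^ θ := rpow_le_rpow hx0.le (by linarith) hθ0.le
  have hinv := inv_sub_inv_le_of_goldenRatio_le (goldenRatio_le_rpow hx) hXY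
  have hc : 3 * (2 - φ) * (3 - φ) ≤ 2 * φ - 1 := by
    nlinarith [goldenRatio_sq, eleven_div_seven_lt_goldenRatio]
  rw [sternMajorant_four_mul hx0.le, sternMajorant, sqrt_five_eq]
  rw [mul_div_assoc] at hP hY hD
  -- In terms of `X = x ^ θ` and `Q = X / x`, the tangent bounds `hP`, `hY` leave
  -- `θ Q (3 (2 - φ) (3 - φ) - √5) / 2 ≤ 0` to show, which is `hc`.
  generalize x ^ θ = X at *
  generalize (x - 1 / 2) ^ θ = P at *
  generalize (x + 3 / 2) ^ θ = Y at *
  generalize X / x = Q at *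
  have hφ1 : 0 ≤ 2 * φ - 1 := by linarith [one_lt_goldenRatio]
  have hφ2 : 0 ≤ 2 - φ := by linarith [goldenRatio_lt_two]
  have h1 := mul_le_mul_of_nonneg_left hP hφ1
  have h2 := mul_le_mul_of_nonneg_left hY hφ2
  have h3 := mul_le_mul_of_nonneg_left hinv hφ2
  have h4 : (2 - φ) * ((2 - φ) * (Y - X)) ≤ (2 - φ) * ((2 - φ) * (3 / 2 * (θ * Q))) := by
    gcongr; linarith
  have h5 := mul_le_mul_of_nonneg_right hc hD
  have h6 : φ ^ 2 * X = (φ + 1) * X := by rw [goldenRatio_sq]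
  linarith

lemma tendsto_sternMajorant_div :
    Tendsto (fun n : ℕ => sternMajorant (3 * n + 1) / (n : ℝ) ^ θ) atTop (𝓝 (3 ^ θ)) := by
  have hθ := logb_goldenRatio_pos
  have hn : Tendsto (fun n : ℕ => (n : ℝ)) atTop atTop := tendsto_natCast_atTop_atTop
  have hratio :
      Tendsto (fun n : ℕ => (3 * n + 1 : ℝ) ^ θ / (n : ℝ) ^ θ) atTop (𝓝 (3 ^ θ)) := by
    have h : Tendsto (fun n : ℕ => (3 + (n : ℝ)⁻¹) ^ θ) atTop (𝓝 (3 ^ θ)) := by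
      have := (tendsto_const_nhds (x := (3 : ℝ))).add hn.inv_tendsto_atTop
      rw [add_zero] at this
      exact (continuousAt_rpow_const 3 θ (Or.inl three_ne_zero)).tendsto.comp this
    refine h.congr' ((eventually_gt_atTop 0).mono fun n hn => ?_)
    have hn' : (0 : ℝ) < n := by exact_mod_cast hn
    dsimp only
    rw [← div_rpow (by positivity) hn'.le, add_div, mul_div_cancel_right₀ _ hn'.ne', one_div]
  have hinv :
      Tendsto (fun n : ℕ => ((3 * n + 1 : ℝ) ^ θ)⁻¹ * ((n : ℝ) ^ θ)⁻¹) atTop (𝓝 0) := by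
    have h3n : Tendsto (fun n : ℕ => (3 * n + 1 : ℝ)) atTop atTop :=
      tendsto_atTop_add_const_right _ 1 (hn.const_mul_atTop three_pos)
    simpa using ((tendsto_rpow_atTop hθ).comp h3n).inv_tendsto_atTop.mul
      ((tendsto_rpow_atTop hθ).comp hn).inv_tendsto_atTop
  simpa only [sub_zero] using (hratio.sub hinv).congr fun n => by rw [sternMajorant]; ring

structure IsStern (a : ℕ → ℕ) : Prop where
  zero : a 0 = 0
  one : a 1 = 1
  double (n : ℕ) : a (2 * n) = a n
  double_add_one (n : ℕ) : a (2 * n + 1) = a n + a (n + 1)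

structure SternBound (a : ℕ → ℕ) (n : ℕ) : Prop where
  left : φ * a n + a (n + 1) ≤ (3 * n + 1 : ℝ) ^ θ
  right : a n + φ * a (n + 1) ≤ (3 * n + 2 : ℝ) ^ θ
  sqrt_five : √5 * a n ≤ sternMajorant (3 * n + 1)

def sternPeak : ℕ → ℕ
  | 0 => 1
  | j + 1 => 4 * sternPeak j + 1

lemma three_mul_sternPeak_add_one (j : ℕ) : 3 * sternPeak j + 1 = 4 ^ (j + 1) := by
  induction j with
  | zero => rfl
  | succ j ih => rw [sternPeak, pow_succ]; omega

lemma tendsto_sternPeak : Tendsto sternPeak atTop atTop :=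
  (strictMono_nat_of_lt_succ fun j => by rw [sternPeak]; omega).tendsto_atTop

namespace IsStern

variable {a : ℕ → ℕ}

lemma of_recurrence (ha0 : a 0 = 0) (ha1 : a 1 = 1) (he : ∀ n, 1 ≤ n → a (2 * n) = a n)
    (ho : ∀ n, 1 ≤ n → a (2 * n + 1) = a n + a (n + 1)) : IsStern a where
  zero := ha0
  one := ha1
  double n := by
    rcases n.eq_zero_or_pos with rfl | hn
    · simp [ha0]
    · exact he n hn
  double_add_one n := by
    rcases n.eq_zero_or_pos with rfl | hn
    · simp [ha0, ha1]
    · exact ho n hn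

lemma pos (ha : IsStern a) {n : ℕ} (hn : 0 < n) : 0 < a n := by
  induction n using Nat.strong_induction_on with
  | _ n ih =>
  obtain ⟨m, rfl | rfl⟩ := n.even_or_odd'
  · rw [ha.double]; exact ih m (by omega) (by omega)
  · rcases m.eq_zero_or_pos with rfl | hm
    · simp [ha.one]
    · rw [ha.double_add_one]; have := ih m (by omega) hm; omega

lemma sternBound_zero (ha : IsStern a) : SternBound a 0 where
  left := by simp [ha.zero, ha.one]
  right := by simp [ha.zero, ha.one, two_rpow_logb_goldenRatio]
  sqrt_five := by simp [ha.zero, sternMajorant]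

lemma sternBound_double (ha : IsStern a) {m : ℕ} (hm : 0 < m) (h : SternBound a m) :
    SternBound a (2 * m) := by
  have hv : (1 : ℝ) ≤ a (m + 1) := by exact_mod_cast ha.pos m.succ_pos
  have hm' : (1 : ℝ) ≤ m := by exact_mod_cast hm
  have hdouble : (6 * m + 2 : ℝ) ^ θ = φ * (3 * m + 1 : ℝ) ^ θ := by
    rw [← two_mul_rpow (by positivity)]; ring_nf
  have hcast : (3 * ((2 * m : ℕ) : ℝ) + 1) = 6 * m + 1 := by push_cast; ring
  have hcast' : (3 * ((2 * m : ℕ) : ℝ) + 2) = 6 * m + 2 := by push_cast; ring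
  refine ⟨?_, ?_, ?_⟩ <;> simp only [ha.double, ha.double_add_one, hcast, hcast', Nat.cast_add]
  · have hgap := add_one_rpow_le (x := 6 * m + 1) (by linarith)
    rw [show (6 * m + 1 + 1 : ℝ) = 6 * m + 2 by ring, hdouble] at hgap
    calc φ * a m + (a m + a (m + 1)) = φ * (φ * a m + a (m + 1)) - (φ - 1) * a (m + 1) := by
          linear_combination (-(a m : ℝ)) * goldenRatio_sq
      _ ≤ φ * (3 * m + 1 : ℝ) ^ θ - (φ - 1) * 1 := by
          gcongr
          · exact h.left
          · linarith [one_lt_goldenRatio]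
      _ ≤ (6 * m + 1 : ℝ) ^ θ := by linarith
  · calc a m + φ * (a m + a (m + 1)) = φ * (φ * a m + a (m + 1)) := by
          linear_combination (-(a m : ℝ)) * goldenRatio_sq
      _ ≤ φ * (3 * m + 1 : ℝ) ^ θ := by gcongr; exact h.left
      _ = (6 * m + 2 : ℝ) ^ θ := hdouble.symm
  · exact h.sqrt_five.trans (sternMajorant_le_sternMajorant (by positivity) (by linarith))

lemma sternBound_double_add_one (ha : IsStern a) {m : ℕ} (h : SternBound a m) :
    φ * a (2 * m + 1) + a (2 * m + 1 + 1) ≤ (3 * ((2 * m + 1 : ℕ) : ℝ) + 1) ^ θ ∧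
      a (2 * m + 1) + φ * a (2 * m + 1 + 1) ≤ (3 * ((2 * m + 1 : ℕ) : ℝ) + 2) ^ θ := by
  have hdouble : (6 * m + 4 : ℝ) ^ θ = φ * (3 * m + 2 : ℝ) ^ θ := by
    rw [← two_mul_rpow (by positivity)]; ring_nf
  have hv : a (2 * m + 1 + 1) = a (m + 1) := by
    rw [show 2 * m + 1 + 1 = 2 * (m + 1) by ring, ha.double]
  have hcast : (3 * ((2 * m + 1 : ℕ) : ℝ) + 1) = 6 * m + 4 := by push_cast; ring
  have hcast' : (3 * ((2 * m + 1 : ℕ) : ℝ) + 2) = 6 * m + 5 := by push_cast; ring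
  rw [hcast, hcast', ha.double_add_one, hv]
  push_cast
  have hright : φ * (a m + φ * a (m + 1)) ≤ (6 * m + 4 : ℝ) ^ θ := by
    rw [hdouble]; gcongr; exact h.right
  constructor
  · calc φ * (a m + a (m + 1)) + a (m + 1) = φ * (a m + φ * a (m + 1)) := by
          linear_combination (-(a (m + 1) : ℝ)) * goldenRatio_sq
      _ ≤ (6 * m + 4 : ℝ) ^ θ := hright
  · calc a m + a (m + 1) + φ * a (m + 1) ≤ φ * (a m + φ * a (m + 1)) := by
          nlinarith [goldenRatio_sq, one_lt_goldenRatio, (a m).cast_nonneg (α := ℝ)]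
      _ ≤ (6 * m + 4 : ℝ) ^ θ := hright
      _ ≤ (6 * m + 5 : ℝ) ^ θ :=
          rpow_le_rpow (by positivity) (by linarith) logb_goldenRatio_pos.le

lemma sqrt_five_mul_apply_four_mul_add_one_le (ha : IsStern a) {k : ℕ} (h : SternBound a k) :
    √5 * a (4 * k + 1) ≤ sternMajorant (3 * ((4 * k + 1 : ℕ) : ℝ) + 1) := by
  have hcast : (3 * ((4 * k + 1 : ℕ) : ℝ) + 1) = 4 * (3 * k + 1) := by push_cast; ring
  have ha' : a (4 * k + 1) = 2 * a k + a (k + 1) := by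
    rw [show 4 * k + 1 = 2 * (2 * k) + 1 by ring, ha.double_add_one, ha.double, ha.double_add_one]
    ring
  rw [hcast, sternMajorant_four_mul (by positivity), ha']
  push_cast
  have h2φ : 0 ≤ 2 - φ := by linarith [goldenRatio_lt_two]
  calc √5 * (2 * a k + a (k + 1)) = √5 * (φ * a k + a (k + 1)) + (2 - φ) * (√5 * a k) := by
        ring
    _ ≤ √5 * (3 * k + 1 : ℝ) ^ θ + (2 - φ) * sternMajorant (3 * k + 1) := by
        gcongr
        · exact h.left
        · exact h.sqrt_five
    _ = φ ^ 2 * (3 * k + 1 : ℝ) ^ θ - (2 - φ) * ((3 * k + 1 : ℝ) ^ θ)⁻¹ := by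
        rw [sternMajorant, sqrt_five_eq]
        linear_combination (-(3 * k + 1 : ℝ) ^ θ) * goldenRatio_sq

lemma sqrt_five_mul_apply_four_mul_add_three_le (ha : IsStern a) {k : ℕ} (hk : SternBound a k)
    (hk' : SternBound a (k + 1)) :
    √5 * a (4 * k + 3) ≤ sternMajorant (3 * ((4 * k + 3 : ℕ) : ℝ) + 1) := by
  have hcast : (3 * ((4 * k + 3 : ℕ) : ℝ) + 1) = 4 * (3 * k + 5 / 2) := by push_cast; ring
  have ha' : a (4 * k + 3) = a k + 2 * a (k + 1) := by
    rw [show 4 * k + 3 = 2 * (2 * k + 1) + 1 by ring, ha.double_add_one, ha.double_add_one,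
      show 2 * k + 1 + 1 = 2 * (k + 1) by ring, ha.double]
    ring
  have hkey := le_sternMajorant_four_mul (x := 3 * k + 5 / 2) (by linarith [k.cast_nonneg (α := ℝ)])
  rw [show (3 * k + 5 / 2 - 1 / 2 : ℝ) = 3 * k + 2 by ring,
    show (3 * k + 5 / 2 + 3 / 2 : ℝ) = 3 * ((k + 1 : ℕ) : ℝ) + 1 by push_cast; ring] at hkey
  rw [hcast, ha']
  push_cast
  have h2φ : 0 ≤ 2 - φ := by linarith [goldenRatio_lt_two]
  calc √5 * (a k + 2 * a (k + 1)) = √5 * (a k + φ * a (k + 1)) + (2 - φ) * (√5 * a (k + 1)) := by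
        ring
    _ ≤ √5 * (3 * k + 2 : ℝ) ^ θ + (2 - φ) * sternMajorant (3 * ((k + 1 : ℕ) : ℝ) + 1) := by
        gcongr
        · exact hk.right
        · exact hk'.sqrt_five
    _ ≤ _ := hkey

lemma sternBound (ha : IsStern a) (n : ℕ) : SternBound a n := by
  induction n using Nat.strong_induction_on with
  | _ n ih =>
  rcases n.eq_zero_or_pos with rfl | hn
  · exact ha.sternBound_zero
  obtain ⟨m, rfl | rfl⟩ := n.even_or_odd'
  · exact ha.sternBound_double (by omega) (ih m (by omega))
  · obtain ⟨hleft, hright⟩ := ha.sternBound_double_add_one (ih m (by omega))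
    refine ⟨hleft, hright, ?_⟩
    obtain ⟨k, rfl | rfl⟩ := m.even_or_odd'
    · rw [show 2 * (2 * k) + 1 = 4 * k + 1 by ring]
      exact ha.sqrt_five_mul_apply_four_mul_add_one_le (ih k (by omega))
    · rw [show 2 * (2 * k + 1) + 1 = 4 * k + 3 by ring]
      exact ha.sqrt_five_mul_apply_four_mul_add_three_le (ih k (by omega)) (ih (k + 1) (by omega))

lemma apply_sternPeak (ha : IsStern a) (j : ℕ) :
    a (sternPeak j) = Nat.fib (2 * j + 2) ∧ a (sternPeak j + 1) = Nat.fib (2 * j + 1) := by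
  induction j with
  | zero => exact ⟨ha.one, by simpa [sternPeak, ha.one] using ha.double 1⟩
  | succ j ih =>
    have h3 : Nat.fib (2 * j + 3) = Nat.fib (2 * j + 1) + Nat.fib (2 * j + 2) := Nat.fib_add_two
    have h4 : Nat.fib (2 * j + 4) = Nat.fib (2 * j + 2) + Nat.fib (2 * j + 3) := Nat.fib_add_two
    rw [sternPeak, show 4 * sternPeak j + 1 = 2 * (2 * sternPeak j) + 1 by ring,
      show 2 * (2 * sternPeak j) + 1 + 1 = 2 * (2 * sternPeak j + 1) by ring,
      ha.double_add_one, ha.double, ha.double_add_one, ha.double, ha.double_add_one, ih.1, ih.2,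
      show 2 * (j + 1) + 2 = 2 * j + 4 by ring, show 2 * (j + 1) + 1 = 2 * j + 3 by ring]
    omega

lemma sqrt_five_mul_apply_sternPeak (ha : IsStern a) (j : ℕ) :
    √5 * a (sternPeak j) = sternMajorant (3 * sternPeak j + 1) := by
  have hcast : (3 * (sternPeak j : ℝ) + 1) = 4 ^ (j + 1) := by
    exact_mod_cast three_mul_sternPeak_add_one j
  have hψ : ψ ^ 2 = (φ ^ 2)⁻¹ := by
    rw [← inv_pow, inv_goldenRatio, neg_sq]
  rw [(ha.apply_sternPeak j).1, hcast, sternMajorant, ← rpow_pow_comm (by norm_num), four_rpow,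
    Real.coe_fib_eq, mul_div_cancel₀ _ (by positivity), ← inv_pow, ← hψ, ← pow_mul, ← pow_mul]
  ring_nf

end IsStern

/-- Stern's diatomic sequence is characterized by `a 0 = 0`, `a 1 = 1`, and for `n ≥ 1`,
`a (2n) = a n` and `a (2n+1) = a n + a (n+1)`. With `φ = (1+√5)/2` the golden ratio,
`limsup_{n→∞} a(n) / n^{log₂ φ} = φ^{log₂ 3} / √5`. -/
theorem stern_maximal_order
    (a : ℕ → ℕ) (ha0 : a 0 = 0) (ha1 : a 1 = 1)
    (haeven : ∀ n, 1 ≤ n → a (2 * n) = a n)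
    (haodd : ∀ n, 1 ≤ n → a (2 * n + 1) = a n + a (n + 1)) :
    Filter.limsup
        (fun n : ℕ => (a n : ℝ) / (n : ℝ) ^ (Real.logb 2 ((1 + Real.sqrt 5) / 2)))
        Filter.atTop
      = ((1 + Real.sqrt 5) / 2) ^ (Real.logb 2 3) / Real.sqrt 5 := by
  have ha := IsStern.of_recurrence ha0 ha1 haeven haodd
  have hle (n : ℕ) : (a n : ℝ) ≤ sternMajorant (3 * n + 1) / √5 := by
    rw [le_div_iff₀ (by positivity), mul_comm]
    exact (ha.sternBound n).sqrt_five
  have hpeak (j : ℕ) : (a (sternPeak j) : ℝ) = sternMajorant (3 * sternPeak j + 1) / √5 := by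
    rw [eq_div_iff (by positivity), mul_comm]
    exact ha.sqrt_five_mul_apply_sternPeak j
  rw [rpow_logb_comm two_pos (by norm_num) goldenRatio_pos three_pos]
  refine limsup_eq_of_tendsto_of_eventuallyLE_of_frequently_ge
    (g := fun n : ℕ => sternMajorant (3 * n + 1) / √5 / (n : ℝ) ^ θ) ?_
    (Eventually.of_forall fun n => ?_)
    (tendsto_sternPeak.frequently (Frequently.of_forall fun j => ?_))
  · simpa only [div_right_comm] using tendsto_sternMajorant_div.div_const √5
  · exact div_le_div_of_nonneg_right (hle n) (by positivity)
  · rw [hpeak]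
end

section
/- For every natural number m, a(m) ≤ h(m). -/
/-!
Strong induction on `k`. For even `k`, `a (2n) = a n ≤ h n ≤ h (2n)` because `h` is
nondecreasing. For odd `k`, unfolding Stern's recursion gives `a (4t+3) = a (2t+1) + a (t+1)`,
`a (8q+1) = a q + a (4q+1)` and `a (8q+5) = 2 a (2q+1) + a (q+1)`, so it suffices that `h` is
superadditive in the same pattern: `h (t+1) + h (2t+1) ≤ h (4t+3)`, and so on.
If `m_{n+1} ≤ s < m_{n+2}`, every argument involved lies in one of the four linear pieces of `h`
on `[m_{n+1}, m_{n+5}]`. In terms of `u = m_n`, `e = (-1)^n`, `f = F_n`, `g = F_{n+1}` these pieces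
are explicit; the constant terms cancel by the Fibonacci recursion, and after clearing
denominators each inequality says that a polynomial, affine in `s`, is nonnegative between the
two ends of the window, where it is checked directly. The inequality for `8q+5` fails for
`q = 3, 4`, so `a 29 = 7` and `a 37 = 11` are compared with `h` by hand.
-/

open Nat (fib)

/-- `jacobsthal n = (2 ^ n - (-1) ^ n) / 3` is the paper's `m_n`. -/
def jacobsthal : ℕ → ℕ
  | 0 => 0
  | 1 => 1
  | n + 2 => jacobsthal (n + 1) + 2 * jacobsthal n

theorem jacobsthal_add_two (n : ℕ) :
    jacobsthal (n + 2) = jacobsthal (n + 1) + 2 * jacobsthal n := rfl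

theorem cast_jacobsthal (n : ℕ) : (jacobsthal n : ℝ) = (2 ^ n - (-1) ^ n) / 3 := by
  induction n using Nat.twoStepInduction with
  | zero => simp [jacobsthal]
  | one => norm_num [jacobsthal]
  | more n ih₀ ih₁ =>
    rw [jacobsthal_add_two, Nat.cast_add, Nat.cast_mul, ih₀, ih₁]
    ring

theorem cast_jacobsthal_add (n m : ℕ) :
    (jacobsthal (n + m) : ℝ) = 2 ^ m * jacobsthal n + jacobsthal m * (-1) ^ n := by
  rw [cast_jacobsthal, cast_jacobsthal, cast_jacobsthal, pow_add, pow_add]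
  ring

theorem jacobsthal_mono : Monotone jacobsthal :=
  monotone_nat_of_le_succ fun n => by
    cases n with
    | zero => decide
    | succ n => rw [jacobsthal_add_two]; omega

theorem one_le_jacobsthal {n : ℕ} (hn : 1 ≤ n) : 1 ≤ jacobsthal n :=
  jacobsthal_mono hn

theorem exists_jacobsthal_le_lt {s : ℕ} (hs : 1 ≤ s) :
    ∃ n, 1 ≤ n ∧ jacobsthal (n + 1) ≤ s ∧ s < jacobsthal (n + 2) := by
  induction s, hs using Nat.le_induction with
  | base => exact ⟨1, le_rfl, by decide, by decide⟩
  | succ s hs ih =>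
    obtain ⟨n, hn, hle, hlt⟩ := ih
    rcases (Nat.succ_le_of_lt hlt).lt_or_eq with hlt' | heq
    · exact ⟨n, hn, by omega, hlt'⟩
    · refine ⟨n + 1, by omega, heq.ge, show s + 1 < jacobsthal (n + 3) from ?_⟩
      have hJ : jacobsthal (n + 3) = jacobsthal (n + 2) + 2 * jacobsthal (n + 1) := rfl
      have := one_le_jacobsthal (n := n + 1) (by omega)
      omega

theorem exists_jacobsthal_window {s : ℕ} (hs : 1 ≤ s) :
    ∃ n, 1 ≤ n ∧ 2 * (jacobsthal n : ℝ) + (-1) ^ n ≤ s ∧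
      (s : ℝ) ≤ 4 * jacobsthal n + (-1) ^ n - 1 := by
  obtain ⟨n, hn, h₀, h₁⟩ := exists_jacobsthal_le_lt hs
  have j₁ : (jacobsthal (n + 1) : ℝ) = 2 * jacobsthal n + (-1) ^ n := by
    rw [cast_jacobsthal_add]; norm_num [jacobsthal]
  have j₂ : (jacobsthal (n + 2) : ℝ) = 4 * jacobsthal n + (-1) ^ n := by
    rw [cast_jacobsthal_add]; norm_num [jacobsthal]
  refine ⟨n, hn, ?_, ?_⟩
  · rw [← j₁]; exact_mod_cast h₀
  · have : (s : ℝ) + 1 ≤ jacobsthal (n + 2) := by exact_mod_cast h₁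
    linarith

theorem fib_succ_le_two_mul {n : ℕ} (hn : 1 ≤ n) : fib (n + 1) ≤ 2 * fib n := by
  obtain ⟨m, rfl⟩ := Nat.exists_eq_add_of_le' hn
  rw [Nat.fib_add_two]
  linarith [Nat.fib_le_fib_succ (n := m)]

theorem three_mul_fib_le {n : ℕ} (hn : 2 ≤ n) : 3 * fib n ≤ 2 * fib (n + 1) := by
  obtain ⟨m, rfl⟩ := Nat.exists_eq_add_of_le' hn
  show 3 * fib (m + 2) ≤ 2 * fib (m + 3)
  have h : fib (m + 2) ≤ 2 * fib (m + 1) := fib_succ_le_two_mul (by omega)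
  have e : fib (m + 3) = fib (m + 1) + fib (m + 2) := Nat.fib_add_two
  omega

theorem three_mul_fib_add_six_mul_le {n : ℕ} (hn : 4 ≤ n) :
    3 * fib n + 6 * jacobsthal n * fib n ≤ 4 * jacobsthal n * fib (n + 1) := by
  obtain ⟨m, rfl⟩ := Nat.exists_eq_add_of_le' hn
  have hF : 2 * fib (m + 5) = 3 * fib (m + 4) + fib (m + 1) := by
    simp only [Nat.fib_add_two (n := m + 3), Nat.fib_add_two (n := m + 2),
      Nat.fib_add_two (n := m + 1)]
    ring
  rcases m.eq_zero_or_pos with rfl | hm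
  · decide
  have hJ : 11 ≤ jacobsthal (m + 4) := jacobsthal_mono (show 5 ≤ m + 4 by omega)
  have hF' : fib (m + 4) ≤ 5 * fib (m + 1) := by
    simp only [Nat.fib_add_two (n := m + 2), Nat.fib_add_two (n := m + 1)]
    linarith [Nat.fib_add_two (n := m), Nat.fib_le_fib_succ (n := m)]
  nlinarith

theorem add_mul_nonneg_of_endpoints {a c r R : ℝ} (h₀ : 0 ≤ a) (h₁ : 0 ≤ a + c * R)
    (hr₀ : 0 ≤ r) (hr₁ : r ≤ R) : 0 ≤ a + c * r := by
  rcases le_total 0 c with hc | hc <;> nlinarith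

/-- The four linear pieces of `h` on `[m_{n+1}, m_{n+5}]`, written with `u = m_n`, `e = (-1)^n`,
`f = F_n`, `g = F_{n+1}`: the nodes are `m_{n+1+i} = 2^(i+1) u + m_{i+1} e` and the values
`F_{n+1+i}`. -/
structure FibWindow (φ : ℝ → ℝ) (u e f g : ℝ) : Prop where
  one_le : 1 ≤ u
  sign : e = 1 ∨ e = -1
  nonneg : 0 ≤ f
  le : f ≤ g
  le_two_mul : g ≤ 2 * f
  piece₀ : ∀ x, 2 * u + e ≤ x → x ≤ 4 * u + e →
    φ x = g + f * (x - (2 * u + e)) / (2 * u)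
  piece₁ : ∀ x, 4 * u + e ≤ x → x ≤ 8 * u + 3 * e →
    φ x = f + g + g * (x - (4 * u + e)) / (2 * (2 * u + e))
  piece₂ : ∀ x, 8 * u + 3 * e ≤ x → x ≤ 16 * u + 5 * e →
    φ x = f + 2 * g + (f + g) * (x - (8 * u + 3 * e)) / (2 * (4 * u + e))
  piece₃ : ∀ x, 16 * u + 5 * e ≤ x → x ≤ 32 * u + 11 * e →
    φ x = 2 * f + 3 * g + (f + 2 * g) * (x - (16 * u + 5 * e)) / (2 * (8 * u + 3 * e))

namespace FibWindow

variable {φ : ℝ → ℝ} {u e f g : ℝ}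

theorem neg_one_le (W : FibWindow φ u e f g) : -1 ≤ e := by
  rcases W.sign with rfl | rfl <;> norm_num

theorem le_one (W : FibWindow φ u e f g) : e ≤ 1 := by
  rcases W.sign with rfl | rfl <;> norm_num

theorem add_le_four_mul_add_three (W : FibWindow φ u e f g) (hc : e * f ≤ 2 * u * (g - f))
    {s : ℝ} (hs₀ : 2 * u + e ≤ s) (hs₁ : s ≤ 4 * u + e - 1) :
    φ (s + 1) + φ (2 * s + 1) ≤ φ (4 * s + 3) := by
  have hu := W.one_le
  have he := W.neg_one_le
  rw [W.piece₀ (s + 1) (by linarith) (by linarith),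
    W.piece₁ (2 * s + 1) (by linarith) (by linarith),
    W.piece₂ (4 * s + 3) (by linarith) (by linarith), ← sub_nonneg]
  have hD : 0 < 2 * u * (2 * u + e) * (4 * u + e) :=
    mul_pos (mul_pos (by linarith) (by linarith)) (by linarith)
  rcases W.sign with rfl | rfl
  · have hP : 0 ≤ (s - 2 * u) * (2 * u * (g - f) - f) :=
      mul_nonneg (by linarith) (by linarith)
    refine (div_nonneg hP hD.le).trans_eq ?_
    field_simp (disch := first | linarith | exact ne_of_gt (by linarith))
    ring
  · have hP : 0 ≤ (4 * u - 2 - s) * (2 * u * (g - f) + f) :=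
      mul_nonneg (by linarith) (by linarith)
    refine (div_nonneg hP hD.le).trans_eq ?_
    field_simp (disch := first | linarith | exact ne_of_gt (by linarith))
    ring

theorem two_mul_add_le_eight_mul_add_five (W : FibWindow φ u e f g)
    (hc : 3 * e * f ≤ 2 * u * (2 * g - 3 * f))
    {s : ℝ} (hs₀ : 2 * u + e ≤ s) (hs₁ : s ≤ 4 * u + e - 1) :
    2 * φ (2 * s + 1) + φ (s + 1) ≤ φ (8 * s + 5) := by
  have hu := W.one_le
  have he := W.neg_one_le
  rw [W.piece₀ (s + 1) (by linarith) (by linarith),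
    W.piece₁ (2 * s + 1) (by linarith) (by linarith),
    W.piece₃ (8 * s + 5) (by linarith) (by linarith), ← sub_nonneg]
  have hD : 0 < 2 * u * (2 * u + e) * (8 * u + 3 * e) :=
    mul_pos (mul_pos (by linarith) (by linarith)) (by linarith)
  rcases W.sign with rfl | rfl
  · have hP : 0 ≤ (s - 2 * u) * (2 * u * (2 * g - 3 * f) - 3 * f) :=
      mul_nonneg (by linarith) (by linarith)
    refine (div_nonneg hP hD.le).trans_eq ?_
    field_simp (disch := first | linarith | exact ne_of_gt (by linarith))
    ring
  · have hP : 0 ≤ (4 * u - 2 - s) * (2 * u * (2 * g - 3 * f) + 3 * f) :=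
      mul_nonneg (by linarith) (by linarith)
    refine (div_nonneg hP hD.le).trans_eq ?_
    field_simp (disch := first | linarith | exact ne_of_gt (by linarith))
    ring

theorem add_le_eight_mul_add_one_of_le (W : FibWindow φ u e f g)
    {s : ℝ} (hs₀ : 2 * u + e ≤ s) (hs₁ : s ≤ 4 * u + e - 1)
    (h₈ : 16 * u + 5 * e ≤ 8 * s + 1) :
    φ s + φ (4 * s + 1) ≤ φ (8 * s + 1) := by
  have hu := W.one_le
  have he := W.neg_one_le
  have hf := W.nonneg
  have hg : 0 ≤ g := hf.trans W.le
  rw [W.piece₀ s (by linarith) (by linarith), W.piece₂ (4 * s + 1) (by linarith) (by linarith),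
    W.piece₃ (8 * s + 1) h₈ (by linarith), ← sub_nonneg]
  have hD : 0 < 2 * u * (4 * u + e) * (8 * u + 3 * e) :=
    mul_pos (mul_pos (by linarith) (by linarith)) (by linarith)
  rcases W.sign with rfl | rfl
  · have h₀ : 0 ≤ u * (f * (64 * u ^ 2 + 40 * u + 4) + g * (16 * u + 2)) := by positivity
    have h₁ : 0 ≤ 32 * u ^ 2 - 4 * u - 1 := by nlinarith
    have hP := add_mul_nonneg_of_endpoints h₀
      (c := g * (32 * u ^ 2 + 4 * u) - f * (32 * u ^ 2 + 24 * u + 3))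
      (r := s - (2 * u + 1)) (R := 2 * u - 1)
      (by nlinarith [mul_nonneg hf (by positivity : (0 : ℝ) ≤ 24 * u ^ 2 + 22 * u + 3),
        mul_nonneg (mul_nonneg hg (by positivity : (0 : ℝ) ≤ u)) h₁])
      (by linarith) (by linarith)
    refine (div_nonneg hP hD.le).trans_eq ?_
    field_simp (disch := first | linarith | exact ne_of_gt (by linarith))
    ring
  · have h₀ : 0 ≤ 4 * u * (4 * u - 1) * ((4 * u - 2) * f - g) :=
      mul_nonneg (mul_nonneg (by linarith) (by linarith)) (by nlinarith [W.le_two_mul])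
    have h₁ : 0 ≤ 8 * u ^ 2 - 7 * u + 1 := by nlinarith
    have h₂ : 0 ≤ f * (2 * u - 1) * (16 * u - 3) :=
      mul_nonneg (mul_nonneg hf (by linarith)) (by linarith)
    have hP := add_mul_nonneg_of_endpoints h₀
      (c := g * (32 * u ^ 2 - 4 * u) - f * (32 * u ^ 2 - 24 * u + 3))
      (r := s - (2 * u - 1)) (R := 2 * u - 1)
      (by nlinarith [mul_nonneg (mul_nonneg hg (by positivity : (0 : ℝ) ≤ u)) h₁])
      (by linarith) (by linarith)
    refine (div_nonneg hP hD.le).trans_eq ?_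
    field_simp (disch := first | linarith | exact ne_of_gt (by linarith))
    ring

theorem add_le_eight_mul_add_one (W : FibWindow φ u e f g)
    {s : ℝ} (hs₀ : 2 * u + e ≤ s) (hs₁ : s ≤ 4 * u + e - 1) :
    φ s + φ (4 * s + 1) ≤ φ (8 * s + 1) := by
  by_cases h₈ : 16 * u + 5 * e ≤ 8 * s + 1
  · exact W.add_le_eight_mul_add_one_of_le hs₀ hs₁ h₈
  have hu := W.one_le
  have hf := W.nonneg
  obtain rfl : e = -1 := W.sign.resolve_left (by rintro rfl; linarith)
  rw [W.piece₀ s (by linarith) (by linarith), W.piece₂ (4 * s + 1) (by linarith) (by linarith),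
    W.piece₂ (8 * s + 1) (by linarith) (by linarith), ← sub_nonneg]
  have hP : 0 ≤ 2 * u * ((4 * u - 2) * f - g) + (s - (2 * u - 1)) * (4 * u * g + f) :=
    add_nonneg (mul_nonneg (by linarith) (by nlinarith [W.le_two_mul]))
      (mul_nonneg (by linarith) (by nlinarith [W.le]))
  refine (div_nonneg hP (by nlinarith : (0 : ℝ) ≤ 2 * u * (4 * u - 1))).trans_eq ?_
  field_simp (disch := first | linarith | exact ne_of_gt (by linarith))
  ring

end FibWindow

/-- The paper's `h`, with `m_n = jacobsthal n`; on `[0, 1]` only `h 0 = 0` is recorded. -/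
structure IsFibInterpolant (h : ℝ → ℝ) : Prop where
  apply_zero : h 0 = 0
  apply_of_mem :
    ∀ n : ℕ, 2 ≤ n → ∀ x ∈ Set.Icc (jacobsthal n : ℝ) (jacobsthal (n + 1)),
    h x = fib n + ((fib (n + 1) : ℝ) - fib n) * (x - jacobsthal n) /
      ((jacobsthal (n + 1) : ℝ) - jacobsthal n)

namespace IsFibInterpolant

variable {h : ℝ → ℝ}

theorem apply_eq (H : IsFibInterpolant h) {n : ℕ} (hn : 1 ≤ n) {x : ℝ}
    (h₀ : jacobsthal (n + 1) ≤ x) (h₁ : x ≤ jacobsthal (n + 2)) :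
    h x = fib (n + 1) + fib n * (x - jacobsthal (n + 1)) / (2 * jacobsthal n) := by
  have hF : (fib (n + 2) : ℝ) - fib (n + 1) = fib n := by
    rw [Nat.fib_add_two, Nat.cast_add]; ring
  have hJ : (jacobsthal (n + 2) : ℝ) - jacobsthal (n + 1) = 2 * jacobsthal n := by
    rw [jacobsthal_add_two, Nat.cast_add, Nat.cast_mul]; ring
  rw [H.apply_of_mem (n + 1) (by omega) x ⟨h₀, h₁⟩, hF, hJ]

theorem fibWindow (H : IsFibInterpolant h) {n : ℕ} (hn : 1 ≤ n) :
    FibWindow h (jacobsthal n) ((-1) ^ n) (fib n) (fib (n + 1)) := by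
  have hJ (m : ℕ) := cast_jacobsthal_add n m
  have hF (m : ℕ) : (fib (n + m + 1) : ℝ) = fib m * fib n + fib (m + 1) * fib (n + 1) := by
    rw [add_comm n m]; exact_mod_cast Nat.fib_add m n
  have j₁ : (jacobsthal (n + 1) : ℝ) = 2 * jacobsthal n + (-1) ^ n := by
    rw [hJ]; norm_num [jacobsthal]
  have j₂ : (jacobsthal (n + 2) : ℝ) = 4 * jacobsthal n + (-1) ^ n := by
    rw [hJ]; norm_num [jacobsthal]
  have j₃ : (jacobsthal (n + 3) : ℝ) = 8 * jacobsthal n + 3 * (-1) ^ n := by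
    rw [hJ]; norm_num [jacobsthal]
  have j₄ : (jacobsthal (n + 4) : ℝ) = 16 * jacobsthal n + 5 * (-1) ^ n := by
    rw [hJ]; norm_num [jacobsthal]
  have j₅ : (jacobsthal (n + 5) : ℝ) = 32 * jacobsthal n + 11 * (-1) ^ n := by
    rw [hJ]; norm_num [jacobsthal]
  have f₂ : (fib (n + 2) : ℝ) = fib n + fib (n + 1) := by simpa using hF 1
  have f₃ : (fib (n + 3) : ℝ) = fib n + 2 * fib (n + 1) := by
    simpa [Nat.fib_add_two] using hF 2
  have f₄ : (fib (n + 4) : ℝ) = 2 * fib n + 3 * fib (n + 1) := by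
    simpa [Nat.fib_add_two] using hF 3
  refine ⟨by exact_mod_cast one_le_jacobsthal hn, neg_one_pow_eq_or ℝ n, by positivity,
    by exact_mod_cast Nat.fib_le_fib_succ, by exact_mod_cast fib_succ_le_two_mul hn,
    fun x h₀ h₁ => ?_, fun x h₀ h₁ => ?_, fun x h₀ h₁ => ?_, fun x h₀ h₁ => ?_⟩
  · rw [H.apply_eq hn (by rwa [j₁]) (by rwa [j₂]), j₁]
  · rw [H.apply_eq (n := n + 1) (by omega) (by rwa [j₂]) (by rwa [j₃])]
    simp only [add_assoc, Nat.reduceAdd]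
    rw [f₂, j₂, j₁]
    ring
  · rw [H.apply_eq (n := n + 2) (by omega) (by rwa [j₃]) (by rwa [j₄])]
    simp only [add_assoc, Nat.reduceAdd]
    rw [f₃, f₂, j₃, j₂]
    ring
  · rw [H.apply_eq (n := n + 3) (by omega) (by rwa [j₄]) (by rwa [j₅])]
    simp only [add_assoc, Nat.reduceAdd]
    rw [f₄, f₃, j₄, j₃]
    ring

theorem apply_jacobsthal (H : IsFibInterpolant h) {n : ℕ} (hn : 1 ≤ n) :
    h (jacobsthal (n + 1)) = fib (n + 1) := by
  rw [H.apply_eq hn le_rfl (by exact_mod_cast jacobsthal_mono (Nat.le_succ _))]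
  simp

theorem apply_one (H : IsFibInterpolant h) : h 1 = 1 := by
  simpa [jacobsthal] using H.apply_jacobsthal (n := 1) le_rfl

theorem monotone_comp_natCast (H : IsFibInterpolant h) : Monotone fun k : ℕ ↦ h k := by
  refine monotone_nat_of_le_succ fun k ↦ ?_
  rcases Nat.eq_zero_or_pos k with rfl | hk
  · simp [H.apply_zero, H.apply_one]
  obtain ⟨n, hn, h₀, h₁⟩ := exists_jacobsthal_window hk
  have W := H.fibWindow hn
  have := W.neg_one_le
  push_cast
  rw [W.piece₀ k h₀ (by linarith), W.piece₀ (k + 1) (by linarith) (by linarith)]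
  gcongr
  linarith

theorem add_le_four_mul_add_three (H : IsFibInterpolant h) {t : ℕ} (ht : 1 ≤ t) :
    h ↑(t + 1) + h ↑(2 * t + 1) ≤ h ↑(4 * t + 3) := by
  obtain ⟨n, hn, h₀, h₁⟩ := exists_jacobsthal_window ht
  have W := H.fibWindow hn
  push_cast
  refine W.add_le_four_mul_add_three ?_ h₀ h₁
  rcases Nat.lt_or_ge n 2 with hn₂ | hn₂
  · obtain rfl : n = 1 := by omega
    norm_num [jacobsthal]
  have h₃ : (3 * fib n : ℝ) ≤ 2 * fib (n + 1) := by exact_mod_cast three_mul_fib_le hn₂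
  nlinarith [mul_le_mul_of_nonneg_right W.le_one W.nonneg,
    mul_nonneg (sub_nonneg.2 W.one_le) (sub_nonneg.2 W.le)]

theorem add_le_eight_mul_add_one (H : IsFibInterpolant h) {s : ℕ} (hs : 1 ≤ s) :
    h s + h ↑(4 * s + 1) ≤ h ↑(8 * s + 1) := by
  obtain ⟨n, hn, h₀, h₁⟩ := exists_jacobsthal_window hs
  push_cast
  exact (H.fibWindow hn).add_le_eight_mul_add_one h₀ h₁

theorem two_mul_add_le_eight_mul_add_five (H : IsFibInterpolant h) {s : ℕ} (hs : 1 ≤ s)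
    (hs₃ : s ≠ 3) (hs₄ : s ≠ 4) :
    2 * h ↑(2 * s + 1) + h ↑(s + 1) ≤ h ↑(8 * s + 5) := by
  obtain ⟨n, hn, h₀, h₁⟩ := exists_jacobsthal_window hs
  have W := H.fibWindow hn
  push_cast
  refine W.two_mul_add_le_eight_mul_add_five ?_ h₀ h₁
  rcases Nat.lt_or_ge n 4 with hn₄ | hn₄
  · interval_cases n
    · norm_num [jacobsthal]
    · norm_num [jacobsthal] at h₀ h₁
      have : s ≤ 4 := by exact_mod_cast h₁
      omega
    · norm_num [jacobsthal, Nat.fib_add_two]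
  have h₆ : (3 * fib n + 6 * jacobsthal n * fib n : ℝ) ≤ 4 * jacobsthal n * fib (n + 1) := by
    exact_mod_cast three_mul_fib_add_six_mul_le hn₄
  nlinarith [mul_le_mul_of_nonneg_right W.le_one W.nonneg]

end IsFibInterpolant

structure IsStern_s3 (a : ℕ → ℕ) : Prop where
  apply_zero : a 0 = 0
  apply_one : a 1 = 1
  apply_two_mul : ∀ n, 1 ≤ n → a (2 * n) = a n
  apply_two_mul_add_one : ∀ n, 1 ≤ n → a (2 * n + 1) = a n + a (n + 1)

namespace IsStern_s3

variable {a : ℕ → ℕ}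

theorem apply_four_mul_add_three (ha : IsStern_s3 a) (t : ℕ) :
    a (4 * t + 3) = a (2 * t + 1) + a (t + 1) := by
  rw [show 4 * t + 3 = 2 * (2 * t + 1) + 1 by ring, ha.apply_two_mul_add_one _ (by omega),
    show 2 * t + 1 + 1 = 2 * (t + 1) by ring, ha.apply_two_mul _ (by omega)]

theorem apply_eight_mul_add_one (ha : IsStern_s3 a) {q : ℕ} (hq : 1 ≤ q) :
    a (8 * q + 1) = a q + a (4 * q + 1) := by
  rw [show 8 * q + 1 = 2 * (4 * q) + 1 by ring, ha.apply_two_mul_add_one _ (by omega),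
    show 4 * q = 2 * (2 * q) by ring, ha.apply_two_mul _ (by omega), ha.apply_two_mul _ hq]

theorem apply_eight_mul_add_five (ha : IsStern_s3 a) (q : ℕ) :
    a (8 * q + 5) = 2 * a (2 * q + 1) + a (q + 1) := by
  rw [show 8 * q + 5 = 2 * (4 * q + 2) + 1 by ring, ha.apply_two_mul_add_one _ (by omega),
    show 4 * q + 2 + 1 = 4 * q + 3 by ring, ha.apply_four_mul_add_three,
    show 4 * q + 2 = 2 * (2 * q + 1) by ring, ha.apply_two_mul _ (by omega)]
  ring

/-- `k = 1` starts the recursion, `k = 3, 5` (`t = 0`, `q = 0`) lie below every window, and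
`k = 29, 37` are the exceptions `q = 3, 4`. -/
theorem cast_le_of_small {h : ℝ → ℝ} (ha : IsStern_s3 a) (H : IsFibInterpolant h) {k : ℕ}
    (hk : k ∈ ({1, 3, 5, 29, 37} : Finset ℕ)) : (a k : ℝ) ≤ h k := by
  have a₂ : a 2 = 1 := by simpa [ha.apply_one] using ha.apply_two_mul 1 le_rfl
  have a₃ : a 3 = 2 := by simpa [ha.apply_one] using ha.apply_four_mul_add_three 0
  have a₅ : a 5 = 3 := by simpa [ha.apply_one] using ha.apply_eight_mul_add_five 0
  have a₇ : a 7 = 3 := by simpa [a₂, a₃] using ha.apply_four_mul_add_three 1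
  have a₉ : a 9 = 4 := by simpa [ha.apply_one, a₅] using ha.apply_eight_mul_add_one le_rfl
  have a₂₉ : a 29 = 7 := by
    simpa [a₇, ha.apply_two_mul 2 (by norm_num), a₂] using ha.apply_eight_mul_add_five 3
  have a₃₇ : a 37 = 11 := by simpa [a₉, a₅] using ha.apply_eight_mul_add_five 4
  have h₂₉ : 7 ≤ h 29 := by
    rw [H.apply_eq (n := 5) (by norm_num) (by norm_num [jacobsthal]) (by norm_num [jacobsthal])]
    norm_num [jacobsthal, Nat.fib_add_two]
  have h₃₇ : 11 ≤ h 37 := by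
    rw [H.apply_eq (n := 5) (by norm_num) (by norm_num [jacobsthal]) (by norm_num [jacobsthal])]
    norm_num [jacobsthal, Nat.fib_add_two]
  simp only [Finset.mem_insert, Finset.mem_singleton] at hk
  rcases hk with rfl | rfl | rfl | rfl | rfl
  · simp [ha.apply_one, H.apply_one]
  · simpa [a₃, jacobsthal, Nat.fib_add_two] using (H.apply_jacobsthal (n := 2) (by norm_num)).ge
  · simpa [a₅, jacobsthal, Nat.fib_add_two] using (H.apply_jacobsthal (n := 3) (by norm_num)).ge
  · simpa [a₂₉] using h₂₉
  · simpa [a₃₇] using h₃₇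

theorem cast_le {h : ℝ → ℝ} (ha : IsStern_s3 a) (H : IsFibInterpolant h) (k : ℕ) :
    (a k : ℝ) ≤ h k := by
  induction k using Nat.strong_induction_on with
  | _ k ih =>
  by_cases hk : k ∈ ({1, 3, 5, 29, 37} : Finset ℕ)
  · exact ha.cast_le_of_small H hk
  simp only [Finset.mem_insert, Finset.mem_singleton, not_or] at hk
  obtain ⟨n, rfl⟩ | ⟨t, rfl⟩ | ⟨q, rfl⟩ | ⟨q, rfl⟩ :
      (∃ n, k = 2 * n) ∨ (∃ t, k = 4 * t + 3) ∨
        (∃ q, k = 8 * q + 1) ∨ (∃ q, k = 8 * q + 5) := by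
    have : k % 2 = 0 ∨ k % 4 = 3 ∨ k % 8 = 1 ∨ k % 8 = 5 := by omega
    rcases this with h | h | h | h
    exacts [.inl ⟨k / 2, by omega⟩, .inr (.inl ⟨k / 4, by omega⟩),
      .inr (.inr (.inl ⟨k / 8, by omega⟩)), .inr (.inr (.inr ⟨k / 8, by omega⟩))]
  · rcases n.eq_zero_or_pos with rfl | hn
    · simp [ha.apply_zero, H.apply_zero]
    rw [ha.apply_two_mul n hn]
    exact (ih n (by omega)).trans (H.monotone_comp_natCast (by omega))
  · rw [ha.apply_four_mul_add_three, Nat.cast_add]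
    linarith [ih (2 * t + 1) (by omega), ih (t + 1) (by omega),
      H.add_le_four_mul_add_three (t := t) (by omega)]
  · rw [ha.apply_eight_mul_add_one (by omega), Nat.cast_add]
    linarith [ih q (by omega), ih (4 * q + 1) (by omega),
      H.add_le_eight_mul_add_one (s := q) (by omega)]
  · rw [ha.apply_eight_mul_add_five, Nat.cast_add, Nat.cast_mul, Nat.cast_ofNat]
    linarith [ih (2 * q + 1) (by omega), ih (q + 1) (by omega),
      H.two_mul_add_le_eight_mul_add_five (s := q) (by omega) (by omega) (by omega)]

end IsStern_s3

/-- For every natural number `m`, `a(m) ≤ h(m)`, where `a` is Stern's sequence and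
`h` the piecewise linear function through `(0,0)` and `(m_n, F_n)`. -/
theorem stern_le_h
    (a : ℕ → ℕ) (ha0 : a 0 = 0) (ha1 : a 1 = 1)
    (haeven : ∀ n, 1 ≤ n → a (2 * n) = a n)
    (haodd : ∀ n, 1 ≤ n → a (2 * n + 1) = a n + a (n + 1))
    (M : ℕ → ℝ) (hM : ∀ n : ℕ, M n = (2 ^ n - (-1) ^ n) / 3)
    (h : ℝ → ℝ)
    (h01 : ∀ x ∈ Set.Icc (0 : ℝ) 1, h x = x)
    (hlin : ∀ n : ℕ, 2 ≤ n → ∀ x ∈ Set.Icc (M n) (M (n + 1)),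
      h x = (Nat.fib n : ℝ) +
        ((Nat.fib (n + 1) : ℝ) - (Nat.fib n : ℝ)) * (x - M n) / (M (n + 1) - M n)) :
    ∀ k : ℕ, (a k : ℝ) ≤ h k := by
  have hMJ (n : ℕ) : M n = jacobsthal n := by rw [hM, cast_jacobsthal]
  have H : IsFibInterpolant h :=
    ⟨by simpa using h01 0 (by simp), by simpa only [hMJ] using hlin⟩
  exact IsStern_s3.cast_le ⟨ha0, ha1, haeven, haodd⟩ H
end

section
/- The function x ↦ h(4x+1) − h(2x+1) − h(x) tends to 0 as x → ∞. -/
private lemma fib_le_pow : ∀ n : ℕ, (Nat.fib n : ℝ) ≤ (7/4)^n := by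
  intro n
  induction n using Nat.strong_induction_on with
  | _ n ih =>
    match n with
    | 0 => simp
    | 1 => norm_num
    | (k+2) =>
      have h1 := ih k (by omega)
      have h2 := ih (k+1) (by omega)
      rw [Nat.fib_add_two]
      push_cast
      have e1 : (7/4:ℝ)^(k+2) = (49/16)*(7/4)^k := by ring
      have e2 : (7/4:ℝ)^(k+1) = (7/4)*(7/4)^k := by ring
      nlinarith [pow_nonneg (by norm_num : (0:ℝ) ≤ 7/4) k]

private lemma abs_mul_le_one {c t K : ℝ} (h1 : |c| ≤ K) (h2 : |t| ≤ 1) : |c*t| ≤ K := by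
  rw [abs_mul]
  calc |c| * |t| ≤ K*1 := mul_le_mul h1 h2 (abs_nonneg _) ((abs_nonneg c).trans h1)
  _ = K := mul_one K

set_option maxHeartbeats 4000000 in
/-- `h(4x+1) - h(2x+1) - h(x) → 0` as `x → ∞`. -/
theorem tendsto_h_diff_plus
    (M : ℕ → ℝ) (hM : ∀ n : ℕ, M n = (2 ^ n - (-1) ^ n) / 3)
    (h : ℝ → ℝ)
    (h01 : ∀ x ∈ Set.Icc (0 : ℝ) 1, h x = x)
    (hlin : ∀ n : ℕ, 2 ≤ n → ∀ x ∈ Set.Icc (M n) (M (n + 1)),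
      h x = (Nat.fib n : ℝ) +
        ((Nat.fib (n + 1) : ℝ) - (Nat.fib n : ℝ)) * (x - M n) / (M (n + 1) - M n)) :
    Filter.Tendsto (fun x : ℝ => h (4 * x + 1) - h (2 * x + 1) - h x)
      Filter.atTop (nhds 0) := by
  classical
  -- Core estimate on each interval [M n, M (n+1)]
  have key : ∀ n : ℕ, 2 ≤ n → ∀ x : ℝ, M n ≤ x → x ≤ M (n+1) →
      |h (4*x+1) - h (2*x+1) - h x| ≤ 48 * ((Nat.fib n : ℝ) + (Nat.fib (n+1) : ℝ)) / 2^n := by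
    intro n hn x hx1 hx2
    have hq : (0:ℝ) < 2^n := by positivity
    have h4p : (4:ℝ) ≤ 2^n := by
      calc (4:ℝ) = 2^2 := by norm_num
      _ ≤ 2^n := by apply pow_le_pow_right₀ (by norm_num) hn
    obtain ⟨a, ha0, hA⟩ : ∃ a : ℝ, 0 ≤ a ∧ (Nat.fib n : ℝ) = a := ⟨_, Nat.cast_nonneg _, rfl⟩
    obtain ⟨b, hb0, hB⟩ : ∃ b : ℝ, 0 ≤ b ∧ (Nat.fib (n+1) : ℝ) = b := ⟨_, Nat.cast_nonneg _, rfl⟩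
    have hf2 : (Nat.fib (n+2) : ℝ) = a + b := by
      rw [Nat.fib_add_two]; push_cast; rw [hA, hB]
    have hf3 : (Nat.fib (n+3) : ℝ) = a + 2*b := by
      rw [show n+3 = (n+1)+2 from rfl, Nat.fib_add_two]
      push_cast
      rw [show (n+1)+1 = n+2 from rfl, hf2, hB]; ring
    rw [hA, hB]
    rcases Nat.even_or_odd n with he | ho
    · -- n even
      have hs : ((-1:ℝ))^n = 1 := he.neg_one_pow
      have m0 : M n = ((2:ℝ)^n - 1)/3 := by rw [hM n, hs]
      have m1 : M (n+1) = (2*(2:ℝ)^n + 1)/3 := by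
        rw [hM (n+1), show ((-1:ℝ))^(n+1) = -(-1)^n from by ring, hs]; ring
      have m2 : M (n+2) = (4*(2:ℝ)^n - 1)/3 := by
        rw [hM (n+2), show ((-1:ℝ))^(n+2) = (-1)^n from by ring, hs]; ring
      have m3 : M (n+3) = (8*(2:ℝ)^n + 1)/3 := by
        rw [hM (n+3), show ((-1:ℝ))^(n+3) = -(-1)^n from by ring, hs]; ring
      have m4 : M (n+4) = (16*(2:ℝ)^n - 1)/3 := by
        rw [hM (n+4), show ((-1:ℝ))^(n+4) = (-1)^n from by ring, hs]; ring
      rw [m0] at hx1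
      rw [m1] at hx2
      have hh1 : h x = a + (b - a) * (x - ((2:ℝ)^n - 1)/3) / (((2:ℝ)^n + 2)/3) := by
        have := hlin n hn x (Set.mem_Icc.mpr ⟨by rw [m0]; exact hx1, by rw [m1]; exact hx2⟩)
        rw [this, hA, hB, m0, m1]; ring
      rcases le_total x ((2*(2:ℝ)^n - 2)/3) with hc | hc
      · -- Case B1 : x ∈ [M n, 2 M n]
        have hh2 : h (2*x+1) = b + ((a+b) - b) * ((2*x+1) - (2*(2:ℝ)^n + 1)/3) / ((2*(2:ℝ)^n - 2)/3) := by
          have := hlin (n+1) (by omega) (2*x+1)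
            (Set.mem_Icc.mpr ⟨by rw [m1]; linarith, by rw [show n+1+1 = n+2 from rfl, m2]; linarith⟩)
          rw [this, show n+1+1 = n+2 from rfl, hf2, hB, m1, m2]; ring
        have hh4 : h (4*x+1) = (a+b) + ((a+2*b) - (a+b)) * ((4*x+1) - (4*(2:ℝ)^n - 1)/3) / ((4*(2:ℝ)^n + 2)/3) := by
          have := hlin (n+2) (by omega) (4*x+1)
            (Set.mem_Icc.mpr ⟨by rw [m2]; linarith, by rw [show n+2+1 = n+3 from rfl, m3]; linarith⟩)
          rw [this, show n+2+1 = n+3 from rfl, hf2, hf3, m2, m3]; ring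
        have hd1 : ((2:ℝ)^n + 2) ≠ 0 := by positivity
        have hd2 : (2*(2:ℝ)^n - 2) ≠ 0 := by nlinarith
        have hd3 : (4*(2:ℝ)^n + 2) ≠ 0 := by positivity
        have hd4 : (2*(2:ℝ)^n + 1) ≠ 0 := by positivity
        have hd5 : ((2:ℝ)^n - 1) ≠ 0 := by nlinarith
        have keyid : h (4*x+1) - h (2*x+1) - h x
            = (3*b/(2*(2:ℝ)^n+1) - 3*a/((2:ℝ)^n-1)) * ((3*x - ((2:ℝ)^n-1))/((2:ℝ)^n+2)) := by
          rw [hh1, hh2, hh4]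
          field_simp [hd1, hd2, hd3, hd4, hd5]
          ring
        rw [keyid]
        apply abs_mul_le_one
        · -- |c| ≤ 24 (a+b) / 2^n
          have u1 : 3*b/(2*(2:ℝ)^n+1) ≤ 3*b/2^n := by
            rw [div_le_div_iff₀ (by linarith) hq]
            nlinarith [mul_nonneg hb0 (show (0:ℝ) ≤ 2^n + 1 by linarith)]
          have u2 : 3*a/((2:ℝ)^n-1) ≤ 6*a/2^n := by
            rw [div_le_div_iff₀ (by linarith) hq]
            nlinarith [mul_nonneg ha0 (show (0:ℝ) ≤ 2^n - 2 by linarith)]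
          have u3 : 0 ≤ 3*b/(2*(2:ℝ)^n+1) := by positivity
          have u4 : 0 ≤ 3*a/((2:ℝ)^n-1) := div_nonneg (by linarith) (by linarith)
          have u5 : 3*b/(2:ℝ)^n ≤ 48*(a+b)/2^n := (div_le_div_iff_of_pos_right hq).mpr (by linarith)
          have u6 : 6*a/(2:ℝ)^n ≤ 48*(a+b)/2^n := (div_le_div_iff_of_pos_right hq).mpr (by linarith)
          rw [abs_le]; constructor <;> linarith
        · rw [abs_le]; constructor
          · rw [le_div_iff₀ (by linarith)]; linarith
          · rw [div_le_one (by linarith)]; linarith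
      · rcases le_total x ((4*(2:ℝ)^n - 1)/6) with hc2 | hc2
        · -- Case B2a : x ∈ [2 M n, (M(n+3)-1)/4]
          have hh2 : h (2*x+1) = (a+b) + ((a+2*b) - (a+b)) * ((2*x+1) - (4*(2:ℝ)^n - 1)/3) / ((4*(2:ℝ)^n + 2)/3) := by
            have := hlin (n+2) (by omega) (2*x+1)
              (Set.mem_Icc.mpr ⟨by rw [m2]; linarith, by rw [show n+2+1 = n+3 from rfl, m3]; linarith⟩)
            rw [this, show n+2+1 = n+3 from rfl, hf2, hf3, m2, m3]; ring
          have hh4 : h (4*x+1) = (a+b) + ((a+2*b) - (a+b)) * ((4*x+1) - (4*(2:ℝ)^n - 1)/3) / ((4*(2:ℝ)^n + 2)/3) := by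
            have := hlin (n+2) (by omega) (4*x+1)
              (Set.mem_Icc.mpr ⟨by rw [m2]; linarith, by rw [show n+2+1 = n+3 from rfl, m3]; linarith⟩)
            rw [this, show n+2+1 = n+3 from rfl, hf2, hf3, m2, m3]; ring
          have hd1 : ((2:ℝ)^n + 2) ≠ 0 := by positivity
          have hd3 : (4*(2:ℝ)^n + 2) ≠ 0 := by positivity
          have hd4 : (2*(2:ℝ)^n + 1) ≠ 0 := by positivity
          have keyid : h (4*x+1) - h (2*x+1) - h x
              = (3*b*((2:ℝ)^n-1)/((2*(2:ℝ)^n+1)*((2:ℝ)^n+2)) - 3*a/((2:ℝ)^n+2))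
                * (1 - (x - (2*(2:ℝ)^n-2)/3)) := by
            rw [hh1, hh2, hh4]
            field_simp [hd1, hd3, hd4]
            ring
          rw [keyid]
          apply abs_mul_le_one
          · have u1 : 3*b*((2:ℝ)^n-1)/((2*(2:ℝ)^n+1)*((2:ℝ)^n+2)) ≤ 3*b/2^n := by
              rw [div_le_div_iff₀ (by nlinarith) hq]
              nlinarith [mul_nonneg hb0 (le_of_lt hq), mul_nonneg (mul_nonneg hb0 (le_of_lt hq)) (le_of_lt hq)]
            have u2 : 3*a/((2:ℝ)^n+2) ≤ 3*a/2^n := by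
              rw [div_le_div_iff₀ (by linarith) hq]
              nlinarith [mul_nonneg ha0 (le_of_lt hq)]
            have u3 : 0 ≤ 3*b*((2:ℝ)^n-1)/((2*(2:ℝ)^n+1)*((2:ℝ)^n+2)) := by
              apply div_nonneg _ (by nlinarith)
              nlinarith [mul_nonneg hb0 (show (0:ℝ) ≤ 2^n - 1 by linarith)]
            have u4 : 0 ≤ 3*a/((2:ℝ)^n+2) := by positivity
            have u5 : 3*b/(2:ℝ)^n ≤ 48*(a+b)/2^n := (div_le_div_iff_of_pos_right hq).mpr (by linarith)
            have u6 : 3*a/(2:ℝ)^n ≤ 48*(a+b)/2^n := (div_le_div_iff_of_pos_right hq).mpr (by linarith)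
            rw [abs_le]; constructor <;> linarith
          · rw [abs_le]; constructor <;> [linarith; linarith]
        · -- Case B2b : x ∈ [(M(n+3)-1)/4, M (n+1)]
          have hh2 : h (2*x+1) = (a+b) + ((a+2*b) - (a+b)) * ((2*x+1) - (4*(2:ℝ)^n - 1)/3) / ((4*(2:ℝ)^n + 2)/3) := by
            have := hlin (n+2) (by omega) (2*x+1)
              (Set.mem_Icc.mpr ⟨by rw [m2]; linarith, by rw [show n+2+1 = n+3 from rfl, m3]; linarith⟩)
            rw [this, show n+2+1 = n+3 from rfl, hf2, hf3, m2, m3]; ring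
          have hh4 : h (4*x+1) = (a+2*b) + ((2*a+3*b) - (a+2*b)) * ((4*x+1) - (8*(2:ℝ)^n + 1)/3) / ((8*(2:ℝ)^n - 2)/3) := by
            have hf4 : (Nat.fib (n+4) : ℝ) = 2*a + 3*b := by
              rw [show n+4 = (n+2)+2 from rfl, Nat.fib_add_two]
              push_cast
              rw [show (n+2)+1 = n+3 from rfl, hf2, hf3]; ring
            have := hlin (n+3) (by omega) (4*x+1)
              (Set.mem_Icc.mpr ⟨by rw [m3]; linarith, by rw [show n+3+1 = n+4 from rfl, m4]; linarith⟩)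
            rw [this, show n+3+1 = n+4 from rfl, hf3, hf4, m3, m4]; ring
          have hd1 : ((2:ℝ)^n + 2) ≠ 0 := by positivity
          have hd3 : (4*(2:ℝ)^n + 2) ≠ 0 := by positivity
          have hd4 : (2*(2:ℝ)^n + 1) ≠ 0 := by positivity
          have hd6 : (4*(2:ℝ)^n - 1) ≠ 0 := by nlinarith
          have hd7 : (8*(2:ℝ)^n - 2) ≠ 0 := by nlinarith
          have keyid : h (4*x+1) - h (2*x+1) - h x
              = (3*b*((2:ℝ)^n-1)/((2*(2:ℝ)^n+1)*((2:ℝ)^n+2)) - 3*a/((2:ℝ)^n+2))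
                  * ((2*(2:ℝ)^n+1)/3 - x)
                + 2*(3*(a+b)/(4*(2:ℝ)^n-1) - 3*b/(2*(2:ℝ)^n+1)) * (x - (4*(2:ℝ)^n-1)/6) := by
            rw [hh1, hh2, hh4]
            field_simp [hd1, hd3, hd4, hd6, hd7]
            ring
          rw [keyid]
          have hG : |3*b*((2:ℝ)^n-1)/((2*(2:ℝ)^n+1)*((2:ℝ)^n+2)) - 3*a/((2:ℝ)^n+2)| ≤ 6*(a+b)/2^n := by
            have u1 : 3*b*((2:ℝ)^n-1)/((2*(2:ℝ)^n+1)*((2:ℝ)^n+2)) ≤ 3*b/2^n := by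
              rw [div_le_div_iff₀ (by nlinarith) hq]
              nlinarith [mul_nonneg hb0 (le_of_lt hq), mul_nonneg (mul_nonneg hb0 (le_of_lt hq)) (le_of_lt hq)]
            have u2 : 3*a/((2:ℝ)^n+2) ≤ 3*a/2^n := by
              rw [div_le_div_iff₀ (by linarith) hq]
              nlinarith [mul_nonneg ha0 (le_of_lt hq)]
            have u3 : 0 ≤ 3*b*((2:ℝ)^n-1)/((2*(2:ℝ)^n+1)*((2:ℝ)^n+2)) := by
              apply div_nonneg _ (by nlinarith)
              nlinarith [mul_nonneg hb0 (show (0:ℝ) ≤ 2^n - 1 by linarith)]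
            have u4 : 0 ≤ 3*a/((2:ℝ)^n+2) := by positivity
            have u5 : 3*b/(2:ℝ)^n ≤ 6*(a+b)/2^n := (div_le_div_iff_of_pos_right hq).mpr (by linarith)
            have u6 : 3*a/(2:ℝ)^n ≤ 6*(a+b)/2^n := (div_le_div_iff_of_pos_right hq).mpr (by linarith)
            rw [abs_le]; constructor <;> linarith
          have hBp : |3*(a+b)/(4*(2:ℝ)^n-1) - 3*b/(2*(2:ℝ)^n+1)| ≤ 12*(a+b)/2^n := by
            have u1 : 3*(a+b)/(4*(2:ℝ)^n-1) ≤ 3*(a+b)/2^n := by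
              rw [div_le_div_iff₀ (by linarith) hq]
              nlinarith [mul_nonneg (show (0:ℝ) ≤ a+b by linarith) (le_of_lt hq)]
            have u2 : 3*b/(2*(2:ℝ)^n+1) ≤ 3*b/2^n := by
              rw [div_le_div_iff₀ (by linarith) hq]
              nlinarith [mul_nonneg hb0 (show (0:ℝ) ≤ 2^n + 1 by linarith)]
            have u3 : 0 ≤ 3*(a+b)/(4*(2:ℝ)^n-1) := div_nonneg (by linarith) (by linarith)
            have u4 : 0 ≤ 3*b/(2*(2:ℝ)^n+1) := by positivity
            have u5 : 3*(a+b)/(2:ℝ)^n ≤ 12*(a+b)/2^n := (div_le_div_iff_of_pos_right hq).mpr (by linarith)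
            have u6 : 3*b/(2:ℝ)^n ≤ 12*(a+b)/2^n := (div_le_div_iff_of_pos_right hq).mpr (by linarith)
            rw [abs_le]; constructor <;> linarith
          have ht1 : |(2*(2:ℝ)^n+1)/3 - x| ≤ 1 := by
            rw [abs_le]; constructor <;> [linarith; linarith]
          have ht2 : |x - (4*(2:ℝ)^n-1)/6| ≤ 1 := by
            rw [abs_le]; constructor <;> [linarith; linarith]
          calc |(3*b*((2:ℝ)^n-1)/((2*(2:ℝ)^n+1)*((2:ℝ)^n+2)) - 3*a/((2:ℝ)^n+2))
                  * ((2*(2:ℝ)^n+1)/3 - x)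
                + 2*(3*(a+b)/(4*(2:ℝ)^n-1) - 3*b/(2*(2:ℝ)^n+1)) * (x - (4*(2:ℝ)^n-1)/6)|
              ≤ |(3*b*((2:ℝ)^n-1)/((2*(2:ℝ)^n+1)*((2:ℝ)^n+2)) - 3*a/((2:ℝ)^n+2))
                  * ((2*(2:ℝ)^n+1)/3 - x)|
                + |2*(3*(a+b)/(4*(2:ℝ)^n-1) - 3*b/(2*(2:ℝ)^n+1)) * (x - (4*(2:ℝ)^n-1)/6)| :=
                abs_add_le _ _
            _ ≤ 6*(a+b)/2^n + 2*(12*(a+b)/2^n) := by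
                gcongr
                · exact abs_mul_le_one hG ht1
                · rw [show (2*(3*(a+b)/(4*(2:ℝ)^n-1) - 3*b/(2*(2:ℝ)^n+1)) * (x - (4*(2:ℝ)^n-1)/6))
                      = ((3*(a+b)/(4*(2:ℝ)^n-1) - 3*b/(2*(2:ℝ)^n+1)) * (x - (4*(2:ℝ)^n-1)/6)) * 2 from by ring,
                      abs_mul, abs_two]
                  have := abs_mul_le_one hBp ht2
                  linarith [abs_nonneg ((3*(a+b)/(4*(2:ℝ)^n-1) - 3*b/(2*(2:ℝ)^n+1)) * (x - (4*(2:ℝ)^n-1)/6))]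
            _ ≤ 48*(a+b)/2^n := by
                rw [show 6*(a+b)/(2:ℝ)^n + 2*(12*(a+b)/2^n) = 30*(a+b)/2^n from by ring]
                exact (div_le_div_iff_of_pos_right hq).mpr (by nlinarith)
    · -- n odd
      have hs : ((-1:ℝ))^n = -1 := ho.neg_one_pow
      have hn3 : 3 ≤ n := by
        rcases Nat.lt_or_ge n 3 with h3 | h3
        · interval_cases n
          · exact absurd ho (by decide)
        · exact h3
      have h8p : (8:ℝ) ≤ 2^n := by
        calc (8:ℝ) = 2^3 := by norm_num
        _ ≤ 2^n := by apply pow_le_pow_right₀ (by norm_num) hn3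
      have m0 : M n = ((2:ℝ)^n + 1)/3 := by rw [hM n, hs]; ring
      have m1 : M (n+1) = (2*(2:ℝ)^n - 1)/3 := by
        rw [hM (n+1), show ((-1:ℝ))^(n+1) = -(-1)^n from by ring, hs]; ring
      have m2 : M (n+2) = (4*(2:ℝ)^n + 1)/3 := by
        rw [hM (n+2), show ((-1:ℝ))^(n+2) = (-1)^n from by ring, hs]; ring
      have m3 : M (n+3) = (8*(2:ℝ)^n - 1)/3 := by
        rw [hM (n+3), show ((-1:ℝ))^(n+3) = -(-1)^n from by ring, hs]; ring
      rw [m0] at hx1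
      rw [m1] at hx2
      have hh1 : h x = a + (b - a) * (x - ((2:ℝ)^n + 1)/3) / (((2:ℝ)^n - 2)/3) := by
        have := hlin n hn x (Set.mem_Icc.mpr ⟨by rw [m0]; exact hx1, by rw [m1]; exact hx2⟩)
        rw [this, hA, hB, m0, m1]; ring
      have hh2 : h (2*x+1) = b + ((a+b) - b) * ((2*x+1) - (2*(2:ℝ)^n - 1)/3) / ((2*(2:ℝ)^n + 2)/3) := by
        have := hlin (n+1) (by omega) (2*x+1)
          (Set.mem_Icc.mpr ⟨by rw [m1]; linarith, by rw [show n+1+1 = n+2 from rfl, m2]; linarith⟩)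
        rw [this, show n+1+1 = n+2 from rfl, hf2, hB, m1, m2]; ring
      have hh4 : h (4*x+1) = (a+b) + ((a+2*b) - (a+b)) * ((4*x+1) - (4*(2:ℝ)^n + 1)/3) / ((4*(2:ℝ)^n - 2)/3) := by
        have := hlin (n+2) (by omega) (4*x+1)
          (Set.mem_Icc.mpr ⟨by rw [m2]; linarith, by rw [show n+2+1 = n+3 from rfl, m3]; linarith⟩)
        rw [this, show n+2+1 = n+3 from rfl, hf2, hf3, m2, m3]; ring
      have hd1 : ((2:ℝ)^n - 2) ≠ 0 := by nlinarith
      have hd2 : (2*(2:ℝ)^n + 2) ≠ 0 := by positivity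
      have hd3 : (4*(2:ℝ)^n - 2) ≠ 0 := by nlinarith
      have hd4 : (2*(2:ℝ)^n - 1) ≠ 0 := by nlinarith
      have hd5 : ((2:ℝ)^n + 1) ≠ 0 := by positivity
      have keyid : h (4*x+1) - h (2*x+1) - h x
          = (3*b/(2*(2:ℝ)^n-1) - 3*a/((2:ℝ)^n+1)) * (((2*(2:ℝ)^n-1) - 3*x)/((2:ℝ)^n-2)) := by
        rw [hh1, hh2, hh4]
        field_simp [hd1, hd2, hd3, hd4, hd5]
        ring
      rw [keyid]
      apply abs_mul_le_one
      · have u1 : 3*b/(2*(2:ℝ)^n-1) ≤ 3*b/2^n := by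
          rw [div_le_div_iff₀ (by linarith) hq]
          nlinarith [mul_nonneg hb0 (show (0:ℝ) ≤ 2^n - 1 by linarith)]
        have u2 : 3*a/((2:ℝ)^n+1) ≤ 3*a/2^n := by
          rw [div_le_div_iff₀ (by linarith) hq]
          nlinarith [mul_nonneg ha0 (le_of_lt hq)]
        have u3 : 0 ≤ 3*b/(2*(2:ℝ)^n-1) := div_nonneg (by linarith) (by linarith)
        have u4 : 0 ≤ 3*a/((2:ℝ)^n+1) := by positivity
        have u5 : 3*b/(2:ℝ)^n ≤ 48*(a+b)/2^n := (div_le_div_iff_of_pos_right hq).mpr (by linarith)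
        have u6 : 3*a/(2:ℝ)^n ≤ 48*(a+b)/2^n := (div_le_div_iff_of_pos_right hq).mpr (by linarith)
        rw [abs_le]; constructor <;> linarith
      · rw [abs_le]; constructor
        · rw [le_div_iff₀ (by linarith)]; linarith
        · rw [div_le_one (by linarith)]; linarith
  -- Assembly
  rw [Metric.tendsto_atTop]
  intro ε hε
  obtain ⟨N0, hN0⟩ : ∃ N0 : ℕ, ∀ n ≥ N0, 132*(7/8:ℝ)^n < ε := by
    have h1 : Filter.Tendsto (fun n : ℕ => 132*(7/8:ℝ)^n) Filter.atTop (nhds 0) := by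
      simpa using (tendsto_pow_atTop_nhds_zero_of_lt_one (by norm_num) (by norm_num)).const_mul (132:ℝ)
    obtain ⟨N0, hN0⟩ := (Metric.tendsto_atTop.mp h1) ε hε
    refine ⟨N0, fun n hn => ?_⟩
    have := hN0 n hn
    rw [Real.dist_eq, sub_zero] at this
    calc 132*(7/8:ℝ)^n ≤ |132*(7/8:ℝ)^n| := le_abs_self _
    _ < ε := this
  set N := max N0 2 with hNdef
  refine ⟨M N, fun x hxN => ?_⟩
  have hex : ∃ k : ℕ, x < M (N+1+k) := by
    obtain ⟨m, hm⟩ := pow_unbounded_of_one_lt (3*x+1) (by norm_num : (1:ℝ) < 2)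
    refine ⟨m, ?_⟩
    have hple : ((-1:ℝ))^(N+1+m) ≤ 1 := by
      rcases Nat.even_or_odd (N+1+m) with hp | hp
      · rw [hp.neg_one_pow]
      · rw [hp.neg_one_pow]; norm_num
    have hpow : (2:ℝ)^m ≤ 2^(N+1+m) := by
      apply pow_le_pow_right₀ (by norm_num) (Nat.le_add_left m (N+1))
    rw [hM (N+1+m)]
    have : 3*x + 1 < 2^(N+1+m) := lt_of_lt_of_le hm hpow
    linarith
  set k0 := Nat.find hex with hk0def
  have hk0 : x < M (N+1+k0) := Nat.find_spec hex
  have hMnx : M (N+k0) ≤ x := by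
    rcases Nat.eq_zero_or_pos k0 with h0 | hpos
    · rw [h0]; simpa using hxN
    · obtain ⟨j, hj⟩ := Nat.exists_eq_succ_of_ne_zero (Nat.pos_iff_ne_zero.mp hpos)
      have hmin : ¬ (x < M (N+1+j)) := Nat.find_min hex (by omega)
      push_neg at hmin
      have : N+1+j = N+k0 := by omega
      rwa [this] at hmin
  have hnN : N ≤ N + k0 := Nat.le_add_right _ _
  have hn2 : 2 ≤ N + k0 := le_trans (le_max_right N0 2) hnN
  have hbound := key (N+k0) hn2 x hMnx (by
    have : N + k0 + 1 = N + 1 + k0 := by omega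
    rw [this]; exact le_of_lt hk0)
  rw [Real.dist_eq, sub_zero]
  set n := N + k0 with hndef
  have s1 : (Nat.fib n : ℝ) ≤ (7/4)^n := fib_le_pow n
  have s2 : (Nat.fib (n+1) : ℝ) ≤ (7/4)^(n+1) := fib_le_pow (n+1)
  have hq : (0:ℝ) < 2^n := by positivity
  have s3 : 48 * ((Nat.fib n : ℝ) + (Nat.fib (n+1) : ℝ)) / 2^n ≤ 132*(7/8)^n := by
    have e : (7/8:ℝ)^n = (7/4)^n/2^n := by
      rw [show (7/8:ℝ) = (7/4)/2 from by norm_num, div_pow]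
    rw [e, ← mul_div_assoc]
    apply (div_le_div_iff_of_pos_right hq).mpr
    have e2 : (7/4:ℝ)^(n+1) = (7/4)*(7/4)^n := by ring
    linarith
  have s4 : 132*(7/8:ℝ)^n < ε := hN0 n (le_trans (le_max_left N0 2) hnN)
  calc |h (4*x+1) - h (2*x+1) - h x| ≤ 48 * ((Nat.fib n : ℝ) + (Nat.fib (n+1) : ℝ)) / 2^n := hbound
  _ ≤ 132*(7/8)^n := s3
  _ < ε := s4
end

section
/- The sequence n ↦ √5·F_n − φ^{log₂ 3}·m_n^{log₂ φ} tends to 0 as n → ∞; in fact it is O((φ/2)^n). -/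
open Real

lemma aux_rpow_abs (a t : ℝ) (ha : 0 < a) (ht0 : 0 ≤ t) (ht1 : t ≤ 1) :
    |a ^ t - 1| ≤ |a - 1| := by
  rcases le_total 1 a with h | h
  · have h1 : a ^ t ≤ a := by
      calc a ^ t ≤ a ^ (1:ℝ) := Real.rpow_le_rpow_of_exponent_le h ht1
      _ = a := Real.rpow_one a
    have h2 : 1 ≤ a ^ t := by
      calc (1:ℝ) = a ^ (0:ℝ) := (Real.rpow_zero a).symm
      _ ≤ a ^ t := Real.rpow_le_rpow_of_exponent_le h ht0
    rw [abs_of_nonneg (by linarith), abs_of_nonneg (by linarith)]; linarith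
  · have h1 : a ≤ a ^ t := by
      calc a = a ^ (1:ℝ) := (Real.rpow_one a).symm
      _ ≤ a ^ t := Real.rpow_le_rpow_of_exponent_ge ha h ht1
    have h2 : a ^ t ≤ 1 := by
      calc a ^ t ≤ a ^ (0:ℝ) := Real.rpow_le_rpow_of_exponent_ge ha h ht0
      _ = 1 := Real.rpow_zero a
    rw [abs_of_nonpos (by linarith), abs_of_nonpos (by linarith)]; linarith

lemma aux_key (M : ℕ → ℝ) (hM : ∀ n : ℕ, M n = (2 ^ n - (-1) ^ n) / 3)
    (n : ℕ) (hn : 1 ≤ n) :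
    |Real.sqrt 5 * (Nat.fib n : ℝ) -
        ((1 + Real.sqrt 5) / 2) ^ (Real.logb 2 3)
          * M n ^ (Real.logb 2 ((1 + Real.sqrt 5) / 2))|
      ≤ 2 * (((1 + Real.sqrt 5) / 2) / 2) ^ n := by
  have hs2 : (2:ℝ) < Real.sqrt 5 := by
    rw [show (2:ℝ) = Real.sqrt 4 by rw [show (4:ℝ) = 2^2 by norm_num, Real.sqrt_sq]; norm_num]
    exact Real.sqrt_lt_sqrt (by norm_num) (by norm_num)
  have hs3 : Real.sqrt 5 < 3 := by
    rw [show (3:ℝ) = Real.sqrt 9 by rw [show (9:ℝ) = 3^2 by norm_num, Real.sqrt_sq]; norm_num]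
    exact Real.sqrt_lt_sqrt (by norm_num) (by norm_num)
  set φ : ℝ := (1 + Real.sqrt 5) / 2 with hφdef
  have hφ1 : 1 < φ := by rw [hφdef]; linarith
  have hφ2 : φ < 2 := by rw [hφdef]; linarith
  have hφ0 : 0 < φ := by linarith
  set t : ℝ := Real.logb 2 φ with htdef
  have ht0 : 0 < t := Real.logb_pos (by norm_num) hφ1
  have ht1 : t < 1 := by
    rw [htdef, show (1:ℝ) = Real.logb 2 2 by simp]
    exact Real.logb_lt_logb (by norm_num) hφ0 hφ2
  have h2t : (2:ℝ) ^ t = φ := Real.rpow_logb (by norm_num) (by norm_num) hφ0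
  -- swap exponents
  have hswap : φ ^ (Real.logb 2 3) = (3:ℝ) ^ t := by
    rw [Real.rpow_def_of_pos hφ0, Real.rpow_def_of_pos (by norm_num : (0:ℝ) < 3)]
    congr 1
    rw [htdef, Real.logb, Real.logb]
    ring
  set a : ℝ := 1 - (-1:ℝ) ^ n / 2 ^ n with hadef
  have h2n : (2:ℝ) ≤ 2 ^ n := by
    calc (2:ℝ) = 2 ^ 1 := (pow_one 2).symm
    _ ≤ 2 ^ n := pow_le_pow_right₀ (by norm_num) hn
  have habs : |(-1:ℝ) ^ n / 2 ^ n| = 1 / 2 ^ n := by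
    rw [abs_div, abs_pow, abs_pow, abs_neg, abs_one, one_pow, abs_two]
  have hsmall : |(-1:ℝ) ^ n / 2 ^ n| ≤ 1 / 2 := by
    rw [habs]
    exact div_le_div_of_nonneg_left (by norm_num) (by norm_num) h2n
  have hsmall' := abs_le.1 hsmall
  have ha0 : 0 < a := by rw [hadef]; linarith [hsmall'.2]
  -- the identity
  have hMa : M n = 2 ^ n * a / 3 := by
    rw [hM n, hadef]
    have h2ne : (2:ℝ) ^ n ≠ 0 := by positivity
    field_simp
  have hEq : φ ^ (Real.logb 2 3) * M n ^ t = φ ^ n * a ^ t := by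
    rw [hswap, hMa, Real.div_rpow (by positivity) (by norm_num),
      Real.mul_rpow (by positivity) ha0.le]
    have h2nt : ((2:ℝ) ^ n) ^ t = φ ^ n := by
      rw [← Real.rpow_natCast 2 n, ← Real.rpow_mul (by norm_num), mul_comm,
        Real.rpow_mul (by norm_num), h2t, Real.rpow_natCast]
    have h3 : (3:ℝ) ^ t ≠ 0 := by positivity
    rw [h2nt]
    field_simp
  -- Binet
  set ψ : ℝ := (1 - Real.sqrt 5) / 2 with hψdef
  have hFib : Real.sqrt 5 * (Nat.fib n : ℝ) = φ ^ n - ψ ^ n := by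
    have := Real.coe_fib_eq n
    have h5 : Real.sqrt 5 ≠ 0 := by positivity
    rw [this, mul_comm, div_mul_cancel₀ _ h5]
  -- bounds
  have hψabs : |ψ| ≤ φ / 2 := by
    rw [hψdef, abs_of_nonpos (by linarith), hφdef]; linarith
  have hψn : |ψ ^ n| ≤ (φ / 2) ^ n := by
    rw [abs_pow]
    exact pow_le_pow_left₀ (abs_nonneg _) hψabs n
  have hat : |a ^ t - 1| ≤ 1 / 2 ^ n := by
    calc |a ^ t - 1| ≤ |a - 1| := aux_rpow_abs a t ha0 ht0.le ht1.le
    _ = 1 / 2 ^ n := by rw [hadef, show 1 - (-1:ℝ)^n/2^n - 1 = -((-1:ℝ)^n/2^n) by ring, abs_neg, habs]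
  have hmain : |φ ^ n * (1 - a ^ t)| ≤ (φ / 2) ^ n := by
    rw [abs_mul, abs_of_nonneg (by positivity : (0:ℝ) ≤ φ ^ n)]
    calc φ ^ n * |1 - a ^ t| = φ ^ n * |a ^ t - 1| := by rw [abs_sub_comm]
    _ ≤ φ ^ n * (1 / 2 ^ n) := by
        exact mul_le_mul_of_nonneg_left hat (by positivity)
    _ = (φ / 2) ^ n := by rw [mul_one_div, ← div_pow]
  calc |Real.sqrt 5 * (Nat.fib n : ℝ) - φ ^ (Real.logb 2 3) * M n ^ t|
      = |φ ^ n * (1 - a ^ t) + (- ψ ^ n)| := by rw [hFib, hEq]; ring_nf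
    _ ≤ |φ ^ n * (1 - a ^ t)| + |(- ψ ^ n)| := abs_add_le _ _
    _ ≤ (φ / 2) ^ n + (φ / 2) ^ n := by
        rw [abs_neg]; exact add_le_add hmain hψn
    _ = 2 * (φ / 2) ^ n := by ring

/-- `√5·F_n - φ^(log₂ 3)·m_n^(log₂ φ) → 0` as `n → ∞`; in fact it is `O((φ/2)^n)`. -/
theorem fib_minus_power_tendsto_zero
    (M : ℕ → ℝ) (hM : ∀ n : ℕ, M n = (2 ^ n - (-1) ^ n) / 3) :
    Filter.Tendsto
      (fun n : ℕ => Real.sqrt 5 * (Nat.fib n : ℝ) -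
        ((1 + Real.sqrt 5) / 2) ^ (Real.logb 2 3)
          * M n ^ (Real.logb 2 ((1 + Real.sqrt 5) / 2)))
      Filter.atTop (nhds 0) ∧
    ∃ C : ℝ, ∀ n : ℕ, 2 ≤ n →
      |Real.sqrt 5 * (Nat.fib n : ℝ) -
        ((1 + Real.sqrt 5) / 2) ^ (Real.logb 2 3)
          * M n ^ (Real.logb 2 ((1 + Real.sqrt 5) / 2))|
        ≤ C * (((1 + Real.sqrt 5) / 2) / 2) ^ n := by
  have hs2 : (2:ℝ) < Real.sqrt 5 := by
    rw [show (2:ℝ) = Real.sqrt 4 by rw [show (4:ℝ) = 2^2 by norm_num, Real.sqrt_sq]; norm_num]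
    exact Real.sqrt_lt_sqrt (by norm_num) (by norm_num)
  have hs3 : Real.sqrt 5 < 3 := by
    rw [show (3:ℝ) = Real.sqrt 9 by rw [show (9:ℝ) = 3^2 by norm_num, Real.sqrt_sq]; norm_num]
    exact Real.sqrt_lt_sqrt (by norm_num) (by norm_num)
  constructor
  · have h0 : (0:ℝ) ≤ ((1 + Real.sqrt 5) / 2) / 2 := by linarith
    have h1 : ((1 + Real.sqrt 5) / 2) / 2 < 1 := by linarith
    have hb : Filter.Tendsto (fun n : ℕ => 2 * (((1 + Real.sqrt 5) / 2) / 2) ^ n)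
        Filter.atTop (nhds 0) := by
      simpa using (tendsto_pow_atTop_nhds_zero_of_lt_one h0 h1).const_mul 2
    refine squeeze_zero_norm' ?_ hb
    filter_upwards [Filter.eventually_ge_atTop 1] with n hn
    simpa [Real.norm_eq_abs] using aux_key M hM n hn
  · exact ⟨2, fun n hn => aux_key M hM n (by omega)⟩
end

section
/- limsup_{n→∞} a(n) / ((φ^{log₂ 3}/√5)·n^{log₂ φ}) ≤ 1. -/
set_option maxHeartbeats 1000000

open Real Filter

section helpers
variable {s φ α : ℝ}

lemma thru0 (hα1 : α < 1) {x y : ℝ} (hx : 0 < x) (hxy : x ≤ y) : x * y^α ≤ y * x^α := by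
  have hy : 0 < y := lt_of_lt_of_le hx hxy
  have h1 : (x/y)^(1:ℝ) ≤ (x/y)^α :=
    Real.rpow_le_rpow_of_exponent_ge (by positivity) (by
      rw [div_le_one hy]; exact hxy) hα1.le
  rw [Real.rpow_one, Real.div_rpow hx.le hy.le, div_le_div_iff₀ hy (by positivity)] at h1
  nlinarith [Real.rpow_pos_of_pos hx α, Real.rpow_pos_of_pos hy α]

lemma concave3 (hα0 : 0 < α) (hα1 : α < 1) {a b : ℝ} (ha : 0 ≤ a) (hab : a ≤ b) :
    3/4*a^α + 1/4*b^α ≤ ((3*a+b)/4)^α := by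
  have h := (Real.concaveOn_rpow hα0.le hα1.le).2 (Set.mem_Ici.2 ha)
    (Set.mem_Ici.2 (ha.trans hab)) (by norm_num : (0:ℝ) ≤ 3/4) (by norm_num : (0:ℝ) ≤ 1/4)
    (by norm_num)
  simp only [smul_eq_mul] at h
  calc 3/4*a^α + 1/4*b^α ≤ (3/4*a + 1/4*b)^α := h
    _ = ((3*a+b)/4)^α := by ring_nf

lemma rle_self (hα1 : α < 1) {x : ℝ} (hx : 1 ≤ x) : x^α ≤ x := by
  nth_rewrite 2 [← Real.rpow_one x]
  exact Real.rpow_le_rpow_of_exponent_le hx hα1.le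

lemma rmul2 (h2 : (2:ℝ)^α = φ) {t : ℝ} (ht : 0 ≤ t) : (2*t)^α = φ*t^α := by
  rw [Real.mul_rpow (by norm_num) ht, h2]

lemma rmul4 (h2 : (2:ℝ)^α = φ) {t : ℝ} (ht : 0 ≤ t) : (4*t)^α = φ*(φ*t^α) := by
  rw [show (4:ℝ)*t = 2*(2*t) by ring, rmul2 h2 (by positivity), rmul2 h2 ht]

end helpers

lemma algW_even (s φ A p q : ℝ) (h2φ : 2*φ = 1+s) (hφlt : φ < 2) (hspos : 0 < s)
    (hU : φ*p+q ≤ A) (hS : s*p ≤ A) : s*(p+(p+q)) ≤ φ*A + A := by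
  have Q1 : s*(φ*p+q) ≤ s*A := mul_le_mul_of_nonneg_left hU hspos.le
  have Q2 : (2-φ)*(s*p) ≤ (2-φ)*A := mul_le_mul_of_nonneg_left hS (by linarith)
  have E6 : 2*(φ*A) = (1+s)*A := by rw [← mul_assoc, h2φ]
  nlinarith [Q1, Q2, E6]

lemma algAX (t A X c : ℝ) (f1 : (3*t+1/2)*A ≤ (3*t+1)*X) (f2 : 4*A ≤ (3*t+1)*c) :
    (3*t+1)*(A-X) ≤ (3*t+1)*(c/8) := by nlinarith [f1, f2]

lemma algU_even (φ A X p q : ℝ) (hφ1 : 1.6 < φ)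
    (hPU : (φ+1)*p + φ*q ≤ φ*A) (hP2 : φ*A - φ*X ≤ (2*φ+1)/8)
    (hP3 : (φ-1)*1 ≤ (φ-1)*q) : φ*p+(p+q) ≤ φ*X := by nlinarith [hPU, hP2, hP3]

lemma algW_odd (s φ B R C : ℝ) (h2φ : 2*φ = 1+s) (hφlt : φ < 2) (hs1 : 2.2 < s)
    (hspos : 0 < s) (p q : ℝ)
    (hV : p+φ*q ≤ B) (hSq : s*q ≤ R) (hBR : B ≤ R)
    (hconc : 3/4*B + 1/4*R ≤ C) : s*((p+q)+q) ≤ φ*C + C := by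
  have Q1 : s*(p+φ*q) ≤ s*B := mul_le_mul_of_nonneg_left hV hspos.le
  have Q2 : (2-φ)*(s*q) ≤ (2-φ)*R := mul_le_mul_of_nonneg_left hSq (by linarith)
  have Q3 : ((5*s-9)/8)*B ≤ ((5*s-9)/8)*R := mul_le_mul_of_nonneg_left hBR (by linarith)
  have Q4 : (φ+1)*(3/4*B + 1/4*R) ≤ (φ+1)*C := mul_le_mul_of_nonneg_left hconc (by linarith)
  have EB : 2*(φ*B) = (1+s)*B := by rw [← mul_assoc, h2φ]
  have ER : 2*(φ*R) = (1+s)*R := by rw [← mul_assoc, h2φ]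
  have EC : 2*(φ*C) = (1+s)*C := by rw [← mul_assoc, h2φ]
  nlinarith [Q1, Q2, Q3, Q4, EB, ER, EC]

/-- The key four simultaneous invariants for the Stern sequence. -/
lemma stern_key (s φ α : ℝ) (hs : s^2 = 5) (hs1 : 2.2 < s) (hs2 : s < 2.25)
    (hφ : φ = (1+s)/2) (hα0 : 0 < α) (hα1 : α < 1) (h2 : (2:ℝ)^α = φ)
    (hα33 : 33/50 ≤ α)
    (a : ℕ → ℕ) (ha1 : a 1 = 1)
    (haeven : ∀ n, 1 ≤ n → a (2 * n) = a n)
    (haodd : ∀ n, 1 ≤ n → a (2 * n + 1) = a n + a (n + 1)) :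
    ∀ n, 1 ≤ n →
      s * a n ≤ (3*(n:ℝ)+1)^α ∧ s * (a n + a (n+1)) ≤ (6*(n:ℝ)+4)^α ∧
      φ * a n + a (n+1) ≤ (3*(n:ℝ)+1)^α ∧ a n + φ * a (n+1) ≤ (3*(n:ℝ)+2)^α := by
  have hφ2 : φ*φ = φ + 1 := by rw [hφ]; nlinarith
  have hφpos : 0 < φ := by rw [hφ]; nlinarith
  have hφ1 : 1.6 < φ := by rw [hφ]; nlinarith
  have hφlt : φ < 2 := by rw [hφ]; nlinarith
  have h2φ : 2*φ = 1 + s := by rw [hφ]; ring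
  have hspos : 0 < s := by nlinarith
  have ha2 : a 2 = 1 := by have := haeven 1 le_rfl; simpa [ha1] using this
  have h4 : (4:ℝ)^α = φ*φ := by
    have := rmul4 h2 (t := 1) (by norm_num)
    simpa using this
  have hpos : ∀ n, 1 ≤ n → 1 ≤ a n := by
    intro n
    induction n using Nat.strong_induction_on with
    | _ n ih =>
      intro hn
      rcases Nat.even_or_odd n with ⟨m, hm⟩ | ⟨m, hm⟩
      · have hm1 : 1 ≤ m := by omega
        have hne : n = 2*m := by omega
        subst hne
        rw [haeven m hm1]; exact ih m (by omega) hm1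
      · rcases Nat.eq_or_lt_of_le hn with h1 | h1
        · rw [← h1, ha1]
        · have hm1 : 1 ≤ m := by omega
          subst hm
          rw [haodd m hm1]
          have := ih m (by omega) hm1
          omega
  intro n
  induction n using Nat.strong_induction_on with
  | _ n ih =>
    intro hn
    rcases Nat.eq_or_lt_of_le hn with h1 | h1
    · -- base case n = 1
      subst h1
      have e1 : (3*((1:ℕ):ℝ)+1) = 4 := by norm_num
      have e2 : (6*((1:ℕ):ℝ)+4) = 10 := by norm_num
      have e3 : (3*((1:ℕ):ℝ)+2) = 5 := by norm_num
      rw [e1, e2, e3, ha1, ha2]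
      have h45 : (4:ℝ)^α ≤ (5:ℝ)^α := Real.rpow_le_rpow (by norm_num) (by norm_num) hα0.le
      rw [h4] at h45
      have h10 : 2*s ≤ (10:ℝ)^α := by
        have hA : (10:ℝ)^((33:ℝ)/50) ≤ (10:ℝ)^α :=
          Real.rpow_le_rpow_of_exponent_le (by norm_num) hα33
        have hR : ((10:ℝ)^((33:ℝ)/50))^(50:ℕ) = (10:ℝ)^(33:ℕ) := by
          rw [← Real.rpow_natCast ((10:ℝ)^((33:ℝ)/50)) 50,
            ← Real.rpow_mul (by norm_num : (0:ℝ) ≤ 10),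
            ← Real.rpow_natCast (10:ℝ) 33]
          norm_num
        have h50 : (2*s)^(50:ℕ) ≤ ((10:ℝ)^((33:ℝ)/50))^(50:ℕ) := by
          rw [hR]
          have hL : (2*s)^(50:ℕ) = 2^50 * 5^25 := by
            rw [mul_pow, show (50:ℕ) = 2*25 from rfl, pow_mul s, hs]
          rw [hL]
          norm_num
        have := le_of_pow_le_pow_left₀ (by norm_num : (50:ℕ) ≠ 0)
          (Real.rpow_nonneg (by norm_num) _) h50
        linarith
      refine ⟨?_, ?_, ?_, ?_⟩
      · push_cast; rw [h4]; linarith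
      · push_cast; linarith
      · push_cast; rw [h4]; linarith
      · push_cast; linarith
    · -- inductive step, n ≥ 2
      rcases Nat.even_or_odd n with ⟨m, hm⟩ | ⟨m, hm⟩
      · -- even case n = 2m
        have hm1 : 1 ≤ m := by omega
        have hne : n = 2*m := by omega
        subst hne
        obtain ⟨hS, hW, hU, hV⟩ := ih m (by omega) hm1
        set p := ((a m : ℝ)) with hp
        set q := ((a (m+1) : ℝ)) with hq
        have hp1 : (1:ℝ) ≤ p := by rw [hp]; exact_mod_cast hpos m hm1
        have hq1 : (1:ℝ) ≤ q := by rw [hq]; exact_mod_cast hpos (m+1) (by omega)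
        set t := ((m:ℕ):ℝ) with htd
        have ht1 : (1:ℝ) ≤ t := by rw [htd]; exact_mod_cast hm1
        set A := (3*t+1)^α with hA
        have hApos : 0 < A := by rw [hA]; exact Real.rpow_pos_of_pos (by linarith) _
        have he : (a (2*m) : ℝ) = p := by rw [haeven m hm1]
        have ho : (a (2*m+1) : ℝ) = p + q := by rw [haodd m hm1]; push_cast; ring
        have ecast : ((2*m:ℕ):ℝ) = 2*t := by rw [htd]; push_cast; ring
        rw [he, ho, ecast]
        have mono1 : A ≤ (3*(2*t)+1)^α := by
          rw [hA]; exact Real.rpow_le_rpow (by linarith) (by linarith) hα0.le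
        have PU : φ*(φ*p+q) ≤ φ*A := mul_le_mul_of_nonneg_left hU hφpos.le
        have EU : φ*(φ*p+q) = (φ+1)*p + φ*q := by
          rw [mul_add, ← mul_assoc, hφ2]
        rw [EU] at PU
        refine ⟨by linarith, ?_, ?_, ?_⟩
        · -- W at 2m
          have h124 : (6*(2*t)+4)^α = φ*(φ*A) := by
            rw [show 6*(2*t)+4 = 4*(3*t+1) by ring, hA, rmul4 h2 (by linarith)]
          have E5 : φ*(φ*A) = φ*A + A := by rw [← mul_assoc, hφ2]; ring
          rw [h124, E5]
          exact algW_even s φ A p q h2φ hφlt hspos hU hS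
        · -- U at 2m
          set X := (3*t+1/2)^α with hX
          have h61 : (3*(2*t)+1)^α = φ*X := by
            rw [show 3*(2*t)+1 = 2*(3*t+1/2) by ring, hX, rmul2 h2 (by linarith)]
          rw [h61]
          have f1 : (3*t+1/2)*A ≤ (3*t+1)*X := by
            rw [hA, hX]; exact thru0 hα1 (by linarith) (by linarith)
          have f2 : 4*A ≤ (3*t+1)*(φ*φ) := by
            have h0 := thru0 hα1 (by norm_num : (0:ℝ) < 4) (by linarith : (4:ℝ) ≤ 3*t+1)
            rw [h4] at h0
            rw [hA]; exact h0
          have h8 : (3*t+1)*(A - X) ≤ (3*t+1)*(φ*φ/8) := algAX t A X (φ*φ) f1 f2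
          have hAX : A - X ≤ φ*φ/8 := le_of_mul_le_mul_left h8 (by linarith)
          have P2 : φ*(A-X) ≤ φ*(φ*φ/8) := mul_le_mul_of_nonneg_left hAX hφpos.le
          have E2 : φ*(φ*φ/8) = (2*φ+1)/8 := by
            rw [show φ*(φ*φ/8) = φ*φ*φ/8 by ring, hφ2, add_mul, hφ2, one_mul]; ring
          have P2' : φ*A - φ*X ≤ (2*φ+1)/8 := by rw [E2] at P2; linarith
          have P3 : (φ-1)*1 ≤ (φ-1)*q := mul_le_mul_of_nonneg_left hq1 (by linarith)
          exact algU_even φ A X p q hφ1 PU P2' P3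
        · -- V at 2m
          have h62 : (3*(2*t)+2)^α = φ*A := by
            rw [show 3*(2*t)+2 = 2*(3*t+1) by ring, hA, rmul2 h2 (by linarith)]
          rw [h62]
          linarith [PU]
      · -- odd case n = 2m+1
        have hm1 : 1 ≤ m := by omega
        subst hm
        obtain ⟨hS, hW, hU, hV⟩ := ih m (by omega) hm1
        obtain ⟨hS1, hW1, hU1, hV1⟩ := ih (m+1) (by omega) (by omega)
        set p := ((a m : ℝ)) with hp
        set q := ((a (m+1) : ℝ)) with hq
        have hp1 : (1:ℝ) ≤ p := by rw [hp]; exact_mod_cast hpos m hm1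
        have hq1 : (1:ℝ) ≤ q := by rw [hq]; exact_mod_cast hpos (m+1) (by omega)
        set t := ((m:ℕ):ℝ) with htd
        have ht1 : (1:ℝ) ≤ t := by rw [htd]; exact_mod_cast hm1
        set B := (3*t+2)^α with hB
        have ho : (a (2*m+1) : ℝ) = p + q := by rw [haodd m hm1]; push_cast; ring
        have he2 : (a (2*m+1+1) : ℝ) = q := by
          rw [show 2*m+1+1 = 2*(m+1) by ring, haeven (m+1) (by omega)]
        have ecast : ((2*m+1:ℕ):ℝ) = 2*t+1 := by rw [htd]; push_cast; ring
        rw [ho, he2, ecast]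
        have hSq : s*q ≤ (3*t+4)^α := by
          have e4 : (3*((m+1:ℕ):ℝ)+1) = 3*t+4 := by rw [htd]; push_cast; ring
          rw [e4] at hS1; exact hS1
        set R' := (3*t+4)^α with hR'
        have hBR' : B ≤ R' := by
          rw [hB, hR']; exact Real.rpow_le_rpow (by linarith) (by linarith) hα0.le
        have h64 : (6*t+4)^α = φ*B := by
          rw [show 6*t+4 = 2*(3*t+2) by ring, hB, rmul2 h2 (by linarith)]
        have PV : φ*(p+φ*q) ≤ φ*B := mul_le_mul_of_nonneg_left hV hφpos.le
        have EV : φ*(p+φ*q) = φ*p + φ*q + q := by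
          rw [mul_add, ← mul_assoc, hφ2]; ring
        rw [EV] at PV
        refine ⟨?_, ?_, ?_, ?_⟩
        · rw [show 3*(2*t+1)+1 = 6*t+4 by ring]; exact hW
        · -- W at 2m+1
          set C3 := (3*t+5/2)^α with hC3
          have h1210 : (6*(2*t+1)+4)^α = φ*(φ*C3) := by
            rw [show 6*(2*t+1)+4 = 4*(3*t+5/2) by ring, hC3, rmul4 h2 (by linarith)]
          have E5 : φ*(φ*C3) = φ*C3 + C3 := by rw [← mul_assoc, hφ2]; ring
          rw [h1210, E5]
          have hconc : 3/4*B + 1/4*R' ≤ C3 := by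
            have hcc := concave3 hα0 hα1 (by linarith : (0:ℝ) ≤ 3*t+2)
              (by linarith : (3:ℝ)*t+2 ≤ 3*t+4)
            rw [show (3*(3*t+2)+(3*t+4))/4 = 3*t+5/2 by ring] at hcc
            rw [hB, hR', hC3]; exact hcc
          exact algW_odd s φ B R' C3 h2φ hφlt hs1 hspos p q hV hSq hBR' hconc
        · -- U at 2m+1
          rw [show 3*(2*t+1)+1 = 6*t+4 by ring, h64]
          linarith [PV]
        · -- V at 2m+1
          have mono2 : (6*t+4)^α ≤ (3*(2*t+1)+2)^α :=
            Real.rpow_le_rpow (by linarith) (by linarith) hα0.le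
          rw [h64] at mono2
          have P6 : (φ-1)*1 ≤ (φ-1)*p := mul_le_mul_of_nonneg_left hp1 (by linarith)
          linarith [PV, mono2, P6]


/-- `limsup_{n→∞} a(n) / ((φ^(log₂ 3)/√5)·n^(log₂ φ)) ≤ 1`. -/
theorem limsup_stern_le_one
    (a : ℕ → ℕ) (ha0 : a 0 = 0) (ha1 : a 1 = 1)
    (haeven : ∀ n, 1 ≤ n → a (2 * n) = a n)
    (haodd : ∀ n, 1 ≤ n → a (2 * n + 1) = a n + a (n + 1)) :
    Filter.limsup
        (fun n : ℕ => (a n : ℝ) /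
          ((((1 + Real.sqrt 5) / 2) ^ (Real.logb 2 3) / Real.sqrt 5)
            * (n : ℝ) ^ (Real.logb 2 ((1 + Real.sqrt 5) / 2))))
        Filter.atTop ≤ 1 := by
  set s : ℝ := Real.sqrt 5 with hsdef
  have hs0 : 0 ≤ s := Real.sqrt_nonneg 5
  have hs : s^2 = 5 := Real.sq_sqrt (by norm_num)
  have hs1 : 2.2 < s := by nlinarith
  have hs2 : s < 2.25 := by nlinarith
  set φ : ℝ := (1 + s)/2 with hφdef
  have hφpos : 0 < φ := by rw [hφdef]; linarith
  have hφ1 : 1 < φ := by rw [hφdef]; linarith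
  have hφlt : φ < 2 := by rw [hφdef]; linarith
  set α : ℝ := Real.logb 2 φ with hαdef
  have hα0 : 0 < α := Real.logb_pos (by norm_num) hφ1
  have hα1 : α < 1 := by
    rw [hαdef]
    have := (Real.logb_lt_iff_lt_rpow (by norm_num : (1:ℝ) < 2) hφpos).2
      (by rw [Real.rpow_one]; exact hφlt)
    exact this
  have h2 : (2:ℝ)^α = φ := Real.rpow_logb (by norm_num) (by norm_num) hφpos
  have hα33 : 33/50 ≤ α := by
    rw [hαdef]
    rw [Real.le_logb_iff_rpow_le (by norm_num : (1:ℝ) < 2) hφpos]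
    have step1 : (2:ℝ)^((33:ℝ)/50) ≤ 1.6 := by
      have h50 : ((2:ℝ)^((33:ℝ)/50))^(50:ℕ) ≤ (1.6:ℝ)^(50:ℕ) := by
        have hL : ((2:ℝ)^((33:ℝ)/50))^(50:ℕ) = (2:ℝ)^(33:ℕ) := by
          rw [← Real.rpow_natCast ((2:ℝ)^((33:ℝ)/50)) 50,
            ← Real.rpow_mul (by norm_num : (0:ℝ) ≤ 2),
            ← Real.rpow_natCast (2:ℝ) 33]
          norm_num
        rw [hL]
        norm_num
      exact le_of_pow_le_pow_left₀ (by norm_num) (by norm_num) h50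
    have step2 : (1.6:ℝ) ≤ φ := by rw [hφdef]; linarith
    linarith
  have hkey := stern_key s φ α hs hs1 hs2 hφdef hα0 hα1 h2 hα33 a ha1 haeven haodd
  -- the coefficient identity
  have hcoef : φ ^ (Real.logb 2 3) = (3:ℝ)^α := by
    rw [← h2, ← Real.rpow_mul (by norm_num : (0:ℝ) ≤ 2), mul_comm,
      Real.rpow_mul (by norm_num : (0:ℝ) ≤ 2),
      Real.rpow_logb (by norm_num) (by norm_num) (by norm_num : (0:ℝ) < 3)]
  rw [hcoef]
  set F : ℕ → ℝ := fun n : ℕ => (a n : ℝ) / ((3:ℝ)^α / s * (n:ℝ)^α) with hF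
  have hFnonneg : ∀ n, 0 ≤ F n := by
    intro n
    apply div_nonneg (by positivity)
    apply mul_nonneg (div_nonneg (Real.rpow_nonneg (by norm_num) _) hs0)
      (Real.rpow_nonneg (Nat.cast_nonneg n) _)
  have hbound : ∀ n : ℕ, 1 ≤ n → F n ≤ 1 + 1/(n:ℝ) := by
    intro n hn
    have ht1 : (1:ℝ) ≤ (n:ℝ) := by exact_mod_cast hn
    set t : ℝ := (n:ℝ) with htdef
    have htpos : 0 < t := by linarith
    have hden : (3:ℝ)^α / s * t^α = (3*t)^α / s := by
      rw [Real.mul_rpow (by norm_num) (by linarith)]; ring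
    have hXpos : 0 < (3*t)^α := Real.rpow_pos_of_pos (by linarith) _
    have hSn := (hkey n hn).1
    have h3 := thru0 hα1 (show (0:ℝ) < 3*t by linarith) (show 3*t ≤ 3*t+1 by linarith)
    have h4 : (3*t)*(s*(a n)) ≤ (3*t+1)*(3*t)^α := by
      calc (3*t)*(s*(a n)) ≤ (3*t)*(3*t+1)^α :=
            mul_le_mul_of_nonneg_left hSn (by linarith)
        _ ≤ (3*t+1)*(3*t)^α := h3
    have h5 : (3*t)*((a n)*s) ≤ (3*t)*((1+1/t)*((3*t)^α)) := by
      have hE : (3*t)*((1+1/t)*((3*t)^α)) = (3*t+3)*(3*t)^α := by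
        field_simp
      rw [hE]
      have : (3*t+1)*(3*t)^α ≤ (3*t+3)*(3*t)^α := by nlinarith [hXpos]
      nlinarith [h4]
    have h6 : (a n : ℝ)*s ≤ (1+1/t)*((3*t)^α) := le_of_mul_le_mul_left h5 (by linarith)
    show (a n : ℝ) / ((3:ℝ)^α / s * t^α) ≤ 1 + 1/t
    rw [hden, div_le_iff₀ (by positivity), ← mul_div_assoc,
      le_div_iff₀ (show (0:ℝ) < s by linarith)]
    exact h6
  -- limsup argument
  have cobdd : Filter.IsCoboundedUnder (· ≤ ·) Filter.atTop F :=
    Filter.isCoboundedUnder_le_of_le Filter.atTop hFnonneg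
  by_contra hc
  push_neg at hc
  set L := Filter.limsup F Filter.atTop with hL
  have hLgt : 1 < L := hc
  have hup : L ≤ 1 + (L-1)/2 := by
    apply Filter.limsup_le_of_le cobdd
    rw [Filter.eventually_atTop]
    refine ⟨max 1 ⌈2/(L-1)⌉₊, fun n hn => ?_⟩
    have hn1 : 1 ≤ n := le_trans (le_max_left _ _) hn
    have hn2 : (⌈2/(L-1)⌉₊ : ℝ) ≤ n := by exact_mod_cast le_trans (le_max_right _ _) hn
    have hceil : 2/(L-1) ≤ (n:ℝ) := le_trans (Nat.le_ceil _) hn2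
    have hnpos : (0:ℝ) < n := by exact_mod_cast Nat.lt_of_lt_of_le Nat.zero_lt_one hn1
    have h1n : 1/(n:ℝ) ≤ (L-1)/2 := by
      rw [div_le_div_iff₀ hnpos (by norm_num : (0:ℝ) < 2)]
      have := mul_le_mul_of_nonneg_left hceil (le_of_lt (show (0:ℝ) < L-1 by linarith))
      rw [mul_div_cancel₀ _ (show L-1 ≠ 0 by linarith)] at this
      linarith
    calc F n ≤ 1 + 1/(n:ℝ) := hbound n hn1
      _ ≤ 1 + (L-1)/2 := by linarith
  linarith
end
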